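/- arXiv:1402.3391 — 8 statements merged into one kernel-verified Lean document; each statement's English description precedes it below -/
import Mathlib

section
/- Let m1,...,mr ≥ 1 be integers and N = m1 + ... + mr. Then the polynomial identity holds: x1^{m1-1} ∘ (x1^{m2-1} x2^{m3-1} ⋯ x_{r-1}^{m_r-1}) = Σ_{n1+...+nr=N, ni≥1} e(m1,...,mr; n1,...,nr) x1^{n1-1} ⋯ xr^{nr-1}, where e(m1,...,mr; n1,...,nr) = δ((m1,...,mr),(n1,...,nr)) + Σ_{i=1}^{r-1} δ((m2,...,mi,m_{i+2},...,mr),(n1,...,n_{i-1},n_{i+2},...,nr)) * b_{ni,n_{i+1}}^{m1}. -/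
open MvPolynomial Finset

attribute [local instance] Classical.propDecidable

noncomputable section

/-- `b_{n,n'}^m = (-1)^n * C(m-1, n-1) + (-1)^(n'-m) * C(m-1, n'-1)`. -/
def bb (n n' m : ℕ) : ℚ :=
  (-1 : ℚ) ^ n * ((m - 1).choose (n - 1) : ℚ) +
    (-1 : ℚ) ^ ((n' : ℤ) - (m : ℤ)) * ((m - 1).choose (n' - 1) : ℚ)

/-- The Kronecker delta `δ((m2,...,mi,m_{i+2},...,mr),(n1,...,n_{i-1},n_{i+2},...,nr))`,
for 1-indexed tuples `m, n : ℕ → ℕ` of length `r`. -/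
def deltaCond (r i : ℕ) (m n : ℕ → ℕ) : Prop :=
  (∀ j ∈ Finset.Icc 2 i, m j = n (j - 1)) ∧ (∀ j ∈ Finset.Icc (i + 2) r, m j = n j)

/-- The entry `e(m1,...,mr; n1,...,nr)` of the matrix `E_{N,r}`:
`δ(m,n) + Σ_{i=1}^{r-1} δ((m2,...,mi,m_{i+2},...,mr),(n1,...,n_{i-1},n_{i+2},...,nr)) b_{ni,n_{i+1}}^{m1}`. -/
def eE (r : ℕ) (m n : ℕ → ℕ) : ℚ :=
  (if ∀ j ∈ Finset.Icc 1 r, m j = n j then (1 : ℚ) else 0) +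
    ∑ i ∈ Finset.Icc 1 (r - 1), if deltaCond r i m n then bb (n i) (n (i + 1)) (m 1) else 0

/-- The linearised Ihara action `x1^{m1-1} ∘ (x1^{m2-1} ⋯ x_{r-1}^{m_r-1})`, given by its explicit
formula, written in the 1-indexed variables `X 1, ..., X r`. -/
def iharaLHS (r : ℕ) (m : ℕ → ℕ) : MvPolynomial ℕ ℚ :=
  (∏ j ∈ Finset.Icc 1 r, (X j) ^ (m j - 1)) +
    ∑ i ∈ Finset.Icc 1 (r - 1),
      (X (i + 1) - X i) ^ (m 1 - 1) *
        ((∏ j ∈ Finset.Icc 1 i, (X j) ^ (m (j + 1) - 1)) *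
            (∏ j ∈ Finset.Icc (i + 2) r, (X j) ^ (m j - 1)) -
          (∏ j ∈ Finset.Icc 1 (i - 1), (X j) ^ (m (j + 1) - 1)) *
            (∏ j ∈ Finset.Icc (i + 1) r, (X j) ^ (m j - 1)))

/-!
The `i`-th summand of the action is `(x_{i+1} - x_i)^{m_1-1}` times the difference of two
monomials: `x_1^{m_2-1} ⋯ x_{i-1}^{m_i-1} x_{i+2}^{m_{i+2}-1} ⋯ x_r^{m_r-1}` multiplied by
`x_i^{m_{i+1}-1}`, resp. by `x_{i+1}^{m_{i+1}-1}`. By the binomial theorem, the coefficient of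
`x^{n-1}` in `(x_v - x_u)^a x^t` vanishes unless `n - 1` and `t` agree away from `u, v`, which
for both monomials is exactly the `i`-th Kronecker delta in `e`. Given that, the total degrees
agree because `∑ n = ∑ m`, and the coefficient is a single signed binomial coefficient; the two
coefficients so obtained are the two terms of `b_{n_i, n_{i+1}}^{m_1}`.
-/

theorem sum_single_apply {σ : Type*} [DecidableEq σ] (s : Finset σ) (e : σ → ℕ) (k : σ) :
    (∑ j ∈ s, Finsupp.single j (e j)) k = if k ∈ s then e k else 0 := by
  simp [Finsupp.finsetSum_apply, Finsupp.single_apply]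

theorem sum_single_eq_sum_single_iff {σ : Type*} (s : Finset σ) (e e' : σ → ℕ) :
    ∑ j ∈ s, Finsupp.single j (e j) = ∑ j ∈ s, Finsupp.single j (e' j) ↔
      ∀ j ∈ s, e j = e' j := by
  refine ⟨fun h j hj => ?_, fun h => sum_congr rfl fun j hj => by rw [h j hj]⟩
  simpa [sum_single_apply, hj] using DFunLike.congr_fun h j

theorem add_single_add_single_eq_iff {σ : Type*} {u v : σ} (huv : u ≠ v) (t d : σ →₀ ℕ)
    (k l : ℕ) :
    t + Finsupp.single u k + Finsupp.single v l = d ↔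
      (∀ j, j ≠ u → j ≠ v → d j = t j) ∧ t u + k = d u ∧ t v + l = d v := by
  simp only [Finsupp.ext_iff, Finsupp.add_apply, Finsupp.single_apply]
  refine ⟨fun h => ⟨fun j hju hjv => ?_, ?_, ?_⟩, fun ⟨hoff, hu, hv⟩ j => ?_⟩
  · simpa [Ne.symm hju, Ne.symm hjv] using (h j).symm
  · simpa [huv.symm] using h u
  · simpa [huv] using h v
  · by_cases hju : j = u
    · subst hju; simpa [huv.symm] using hu
    by_cases hjv : j = v
    · subst hjv; simpa [huv] using hv
    simpa [Ne.symm hju, Ne.symm hjv] using (hoff j hju hjv).symm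

theorem prod_X_pow_eq_monomial_sum {R σ : Type*} [CommSemiring R] (s : Finset σ)
    (e : σ → ℕ) :
    ∏ j ∈ s, (X j : MvPolynomial σ R) ^ e j =
      monomial (∑ j ∈ s, Finsupp.single j (e j)) 1 := by
  simp_rw [X_pow_eq_monomial, monomial_sum_one]

theorem X_sub_X_pow_mul_monomial_eq_sum {R σ : Type*} [CommRing R] (u v : σ) (a : ℕ)
    (t : σ →₀ ℕ) :
    (X v - X u) ^ a * monomial t (1 : R) =
      ∑ k ∈ range (a + 1), monomial (t + Finsupp.single u k + Finsupp.single v (a - k))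
        ((-1) ^ k * (a.choose k : R)) := by
  rw [sub_eq_neg_add, add_pow, sum_mul]
  refine sum_congr rfl fun k _ => ?_
  have hmonomial :
      monomial (t + Finsupp.single u k + Finsupp.single v (a - k)) ((-1) ^ k * (a.choose k : R)) =
        C ((-1) ^ k * (a.choose k : R)) * (monomial t 1 * X u ^ k * X v ^ (a - k)) := by
    rw [X_pow_eq_monomial, X_pow_eq_monomial, monomial_mul, monomial_mul, C_mul_monomial,
      mul_one, one_mul, mul_one]
  rw [hmonomial]
  simp only [map_mul, map_pow, map_neg, map_one, map_natCast]
  ring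

theorem coeff_X_sub_X_pow_mul_monomial {R σ : Type*} [CommRing R] {u v : σ} (huv : u ≠ v)
    (a : ℕ) (t d : σ →₀ ℕ) :
    coeff d ((X v - X u) ^ a * monomial t (1 : R)) =
      if (∀ j, j ≠ u → j ≠ v → d j = t j) ∧ t u ≤ d u ∧ d u + d v = t u + t v + a
      then (-1) ^ (d u - t u) * (a.choose (d u - t u) : R) else 0 := by
  set P := (∀ j, j ≠ u → j ≠ v → d j = t j) ∧ t u ≤ d u ∧ d u + d v = t u + t v + a
  have hexponent : ∀ k ∈ range (a + 1),
      t + Finsupp.single u k + Finsupp.single v (a - k) = d ↔ P ∧ d u - t u = k := by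
    intro k hk
    rw [mem_range] at hk
    rw [add_single_add_single_eq_iff huv]
    constructor
    · rintro ⟨hoff, hu, hv⟩
      exact ⟨⟨hoff, by omega, by omega⟩, by omega⟩
    · rintro ⟨⟨hoff, hle, hdeg⟩, rfl⟩
      exact ⟨hoff, by omega, by omega⟩
  rw [X_sub_X_pow_mul_monomial_eq_sum, coeff_sum,
    sum_congr rfl fun k hk => (coeff_monomial _ _ _).trans (if_congr (hexponent k hk) rfl rfl)]
  by_cases hP : P
  · simp only [hP, true_and, sum_ite_eq, mem_range]
    split_ifs with hle
    · rfl
    · rw [Nat.choose_eq_zero_of_lt (by omega), Nat.cast_zero, mul_zero]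
  · simp only [hP, false_and, if_false, sum_const_zero]
    exact (if_neg hP).symm

theorem coeff_X_sub_X_pow_mul_monomial' {R σ : Type*} [CommRing R] {u v : σ} (huv : u ≠ v)
    (a : ℕ) (t d : σ →₀ ℕ) :
    coeff d ((X v - X u) ^ a * monomial t (1 : R)) =
      if (∀ j, j ≠ u → j ≠ v → d j = t j) ∧ t v ≤ d v ∧ d u + d v = t u + t v + a
      then (-1) ^ (a + (d v - t v)) * (a.choose (d v - t v) : R) else 0 := by
  rw [← neg_sub, neg_pow, mul_assoc, ← map_one (C : R →+* MvPolynomial σ R), ← map_neg,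
    ← map_pow, coeff_C_mul, coeff_X_sub_X_pow_mul_monomial huv.symm, mul_ite, mul_zero, pow_add,
    mul_assoc]
  refine if_congr ⟨fun ⟨hoff, hle, hdeg⟩ => ⟨fun j hv hu => hoff j hu hv, hle, by omega⟩,
    fun ⟨hoff, hle, hdeg⟩ => ⟨fun j hv hu => hoff j hu hv, hle, by omega⟩⟩ rfl rfl

theorem neg_one_zpow_natCast_sub {K : Type*} [DivisionRing K] (a b : ℕ) :
    (-1 : K) ^ ((a : ℤ) - b) = (-1) ^ (a + b) := by
  rw [zpow_sub₀ (neg_ne_zero.2 one_ne_zero), zpow_natCast, zpow_natCast, div_eq_mul_inv,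
    ← inv_pow, inv_neg_one, pow_add]

theorem sum_Icc_one_add_eq_add_sum_Icc_one_succ {M : Type*} [AddCommMonoid M] (f : ℕ → M)
    (k : ℕ) :
    ∑ j ∈ Icc 1 k, f j + f (k + 1) = f 1 + ∑ j ∈ Icc 1 k, f (j + 1) := by
  induction k with
  | zero => simp [add_comm]
  | succ k ih =>
    rw [sum_Icc_succ_top (by omega), sum_Icc_succ_top (by omega), ← add_assoc, ih, add_assoc]

theorem sum_Icc_one_eq_add_add_sum_off_pair {M : Type*} [AddCommMonoid M] (f : ℕ → M)
    {r i : ℕ} (hi : 1 ≤ i) (hir : i + 1 ≤ r) :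
    ∑ j ∈ Icc 1 r, f j =
      f i + f (i + 1) + (∑ j ∈ Icc 1 (i - 1), f j + ∑ j ∈ Icc (i + 2) r, f j) := by
  have hsplit : Icc 1 r = insert i (insert (i + 1) (Icc 1 (i - 1) ∪ Icc (i + 2) r)) := by
    ext j; simp only [mem_Icc, mem_insert, mem_union]; omega
  rw [hsplit, sum_insert (by simp; omega), sum_insert (by simp),
    sum_union (disjoint_left.2 fun j hj hj' => by simp only [mem_Icc] at hj hj'; omega), add_assoc]

theorem bb_eq_sub_of_one_le {n n' m : ℕ} (hn : 1 ≤ n) (hn' : 1 ≤ n') (hm : 1 ≤ m) :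
    bb n n' m = (-1) ^ ((m - 1) + (n' - 1)) * ((m - 1).choose (n' - 1) : ℚ) -
      (-1) ^ (n - 1) * ((m - 1).choose (n - 1) : ℚ) := by
  obtain ⟨n, rfl⟩ := Nat.exists_eq_add_of_le' hn
  obtain ⟨n', rfl⟩ := Nat.exists_eq_add_of_le' hn'
  obtain ⟨m, rfl⟩ := Nat.exists_eq_add_of_le' hm
  rw [bb, neg_one_zpow_natCast_sub]
  simp only [Nat.add_sub_cancel]
  ring

/-- The exponent vector of `x_1^{m_2-1} ⋯ x_{i-1}^{m_i-1} x_{i+2}^{m_{i+2}-1} ⋯ x_r^{m_r-1}`. -/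
def gapExponent (r i : ℕ) (m : ℕ → ℕ) : ℕ →₀ ℕ :=
  ∑ j ∈ Icc 1 (i - 1), Finsupp.single j (m (j + 1) - 1) +
    ∑ j ∈ Icc (i + 2) r, Finsupp.single j (m j - 1)

section Summand

variable {r i : ℕ} {m n : ℕ → ℕ}

theorem gapExponent_apply (j : ℕ) :
    gapExponent r i m j =
      (if j ∈ Icc 1 (i - 1) then m (j + 1) - 1 else 0) +
        (if j ∈ Icc (i + 2) r then m j - 1 else 0) := by
  simp only [gapExponent, Finsupp.add_apply, sum_single_apply]

theorem gapExponent_apply_self : gapExponent r i m i = 0 := by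
  simp only [gapExponent_apply, mem_Icc]
  rw [if_neg (by omega), if_neg (by omega)]

theorem gapExponent_apply_succ : gapExponent r i m (i + 1) = 0 := by
  simp only [gapExponent_apply, mem_Icc]
  rw [if_neg (by omega), if_neg (by omega)]

theorem prod_X_pow_mul_eq_monomial_gapExponent_add_single (hi : 1 ≤ i) :
    (∏ j ∈ Icc 1 i, (X j : MvPolynomial ℕ ℚ) ^ (m (j + 1) - 1)) *
        ∏ j ∈ Icc (i + 2) r, X j ^ (m j - 1) =
      monomial (gapExponent r i m + Finsupp.single i (m (i + 1) - 1)) 1 := by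
  rw [show Icc 1 i = insert i (Icc 1 (i - 1)) by ext j; simp only [mem_Icc, mem_insert]; omega,
    prod_insert (by simp; omega), prod_X_pow_eq_monomial_sum, prod_X_pow_eq_monomial_sum,
    X_pow_eq_monomial, monomial_mul, monomial_mul, gapExponent, mul_one, mul_one]
  congr 1
  ac_rfl

theorem prod_X_pow_mul_eq_monomial_gapExponent_add_single_succ (hir : i + 1 ≤ r) :
    (∏ j ∈ Icc 1 (i - 1), (X j : MvPolynomial ℕ ℚ) ^ (m (j + 1) - 1)) *
        ∏ j ∈ Icc (i + 1) r, X j ^ (m j - 1) =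
      monomial (gapExponent r i m + Finsupp.single (i + 1) (m (i + 1) - 1)) 1 := by
  rw [show Icc (i + 1) r = insert (i + 1) (Icc (i + 2) r) by
      ext j; simp only [mem_Icc, mem_insert]; omega,
    prod_insert (by simp), prod_X_pow_eq_monomial_sum, prod_X_pow_eq_monomial_sum,
    X_pow_eq_monomial, monomial_mul, monomial_mul, gapExponent, mul_one, mul_one]
  congr 1
  ac_rfl

theorem agree_off_pair_iff_deltaCond (hm : ∀ j ∈ Icc 1 r, 1 ≤ m j)
    (hn : ∀ j ∈ Icc 1 r, 1 ≤ n j) (hir : i + 1 ≤ r) {t : ℕ →₀ ℕ}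
    (ht : ∀ j, j ≠ i → j ≠ i + 1 → t j = gapExponent r i m j) :
    (∀ j, j ≠ i → j ≠ i + 1 → (∑ j ∈ Icc 1 r, Finsupp.single j (n j - 1)) j = t j) ↔
      deltaCond r i m n := by
  have hm' : ∀ j, 1 ≤ j → j ≤ r → 1 ≤ m j := fun j h1 h2 =>
    hm j (mem_Icc.2 ⟨h1, h2⟩)
  have hn' : ∀ j, 1 ≤ j → j ≤ r → 1 ≤ n j := fun j h1 h2 =>
    hn j (mem_Icc.2 ⟨h1, h2⟩)
  have hval : ∀ j, j ≠ i → j ≠ i + 1 →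
      ((∑ j ∈ Icc 1 r, Finsupp.single j (n j - 1)) j = t j ↔
        (1 ≤ j → j ≤ i - 1 → n j - 1 = m (j + 1) - 1) ∧
          (i + 2 ≤ j → j ≤ r → n j - 1 = m j - 1)) := by
    intro j hji hji1
    rw [ht j hji hji1, gapExponent_apply, sum_single_apply]
    simp only [mem_Icc]
    split_ifs <;> omega
  constructor
  · intro h
    refine ⟨fun j hj => ?_, fun j hj => ?_⟩ <;> rw [mem_Icc] at hj
    · have hj' := ((hval (j - 1) (by omega) (by omega)).1 (h _ (by omega) (by omega))).1
        (by omega) (by omega)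
      rw [Nat.sub_add_cancel (by omega)] at hj'
      have := hm' j (by omega) (by omega)
      have := hn' (j - 1) (by omega) (by omega)
      omega
    · have hj' := ((hval j (by omega) (by omega)).1 (h _ (by omega) (by omega))).2 hj.1 hj.2
      have := hm' j (by omega) (by omega)
      have := hn' j (by omega) (by omega)
      omega
  · rintro ⟨hlo, hhi⟩ j hji hji1
    refine (hval j hji hji1).2 ⟨fun h1 h2 => ?_, fun h1 h2 => ?_⟩
    · simpa using congrArg (· - 1) (hlo (j + 1) (mem_Icc.2 ⟨by omega, by omega⟩)).symm
    · rw [hhi j (mem_Icc.2 ⟨h1, h2⟩)]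

theorem add_add_eq_of_deltaCond (hi : 1 ≤ i) (hir : i + 1 ≤ r)
    (hsum : ∑ j ∈ Icc 1 r, n j = ∑ j ∈ Icc 1 r, m j) (hδ : deltaCond r i m n) :
    n i + n (i + 1) = m 1 + m (i + 1) := by
  obtain ⟨hlo, hhi⟩ := hδ
  have hshift : ∑ j ∈ Icc 1 (i - 1), m (j + 1) = ∑ j ∈ Icc 1 (i - 1), n j :=
    sum_congr rfl fun j hj => by
      simpa using hlo (j + 1) (by simp only [mem_Icc] at hj ⊢; omega)
  have hrest : ∑ j ∈ Icc (i + 2) r, m j = ∑ j ∈ Icc (i + 2) r, n j := sum_congr rfl hhi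
  have hm := sum_Icc_one_add_eq_add_sum_Icc_one_succ m (i - 1)
  rw [Nat.sub_add_cancel hi] at hm
  rw [sum_Icc_one_eq_add_add_sum_off_pair n hi hir,
    sum_Icc_one_eq_add_add_sum_off_pair m hi hir] at hsum
  omega

theorem coeff_iharaLHS_summand (hm : ∀ j ∈ Icc 1 r, 1 ≤ m j)
    (hn : ∀ j ∈ Icc 1 r, 1 ≤ n j) (hsum : ∑ j ∈ Icc 1 r, n j = ∑ j ∈ Icc 1 r, m j)
    (hi : 1 ≤ i) (hir : i + 1 ≤ r) :
    coeff (∑ j ∈ Icc 1 r, Finsupp.single j (n j - 1))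
      ((X (i + 1) - X i) ^ (m 1 - 1) *
        ((∏ j ∈ Icc 1 i, (X j : MvPolynomial ℕ ℚ) ^ (m (j + 1) - 1)) *
            (∏ j ∈ Icc (i + 2) r, X j ^ (m j - 1)) -
          (∏ j ∈ Icc 1 (i - 1), X j ^ (m (j + 1) - 1)) *
            (∏ j ∈ Icc (i + 1) r, X j ^ (m j - 1)))) =
      if deltaCond r i m n then bb (n i) (n (i + 1)) (m 1) else 0 := by
  rw [mul_sub, coeff_sub, prod_X_pow_mul_eq_monomial_gapExponent_add_single hi,
    prod_X_pow_mul_eq_monomial_gapExponent_add_single_succ hir,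
    coeff_X_sub_X_pow_mul_monomial' (by omega), coeff_X_sub_X_pow_mul_monomial (by omega)]
  set d := ∑ j ∈ Icc 1 r, Finsupp.single j (n j - 1)
  have hd : d i = n i - 1 ∧ d (i + 1) = n (i + 1) - 1 := by
    simp only [d, sum_single_apply, mem_Icc]
    constructor <;> rw [if_pos (by omega)]
  have hagreeA := agree_off_pair_iff_deltaCond hm hn hir
    (t := gapExponent r i m + Finsupp.single i (m (i + 1) - 1)) fun j hji _ => by
      simp [hji.symm]
  have hagreeB := agree_off_pair_iff_deltaCond hm hn hir
    (t := gapExponent r i m + Finsupp.single (i + 1) (m (i + 1) - 1)) fun j _ hji1 => by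
      simp [hji1.symm]
  by_cases hδ : deltaCond r i m n
  · have hdeg := add_add_eq_of_deltaCond hi hir hsum hδ
    have h1 := hm 1 (mem_Icc.2 ⟨le_rfl, by omega⟩)
    have hi1 := hm (i + 1) (mem_Icc.2 ⟨by omega, hir⟩)
    have h2 := hn i (mem_Icc.2 ⟨hi, by omega⟩)
    have h3 := hn (i + 1) (mem_Icc.2 ⟨by omega, hir⟩)
    have htA : (gapExponent r i m + Finsupp.single i (m (i + 1) - 1)) i = m (i + 1) - 1 ∧
        (gapExponent r i m + Finsupp.single i (m (i + 1) - 1)) (i + 1) = 0 := by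
      simp [gapExponent_apply_self, gapExponent_apply_succ]
    have htB : (gapExponent r i m + Finsupp.single (i + 1) (m (i + 1) - 1)) i = 0 ∧
        (gapExponent r i m + Finsupp.single (i + 1) (m (i + 1) - 1)) (i + 1) = m (i + 1) - 1 := by
      simp [gapExponent_apply_self, gapExponent_apply_succ]
    rw [htA.1, htA.2, htB.1, htB.2, hd.1, hd.2, if_pos ⟨hagreeA.2 hδ, by omega, by omega⟩,
      if_pos ⟨hagreeB.2 hδ, by omega, by omega⟩, if_pos hδ, Nat.sub_zero, Nat.sub_zero,
      bb_eq_sub_of_one_le h2 h3 h1]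
  · rw [if_neg fun h => hδ (hagreeA.1 h.1), if_neg fun h => hδ (hagreeB.1 h.1), if_neg hδ,
      sub_zero]

end Summand

theorem ihara_coeff_eq_eE_general (r : ℕ) (m : ℕ → ℕ)
    (hm : ∀ j ∈ Finset.Icc 1 r, 1 ≤ m j) (n : ℕ → ℕ)
    (hn : ∀ j ∈ Finset.Icc 1 r, 1 ≤ n j)
    (hsum : ∑ j ∈ Finset.Icc 1 r, n j = ∑ j ∈ Finset.Icc 1 r, m j) :
    MvPolynomial.coeff (∑ j ∈ Finset.Icc 1 r, Finsupp.single j (n j - 1)) (iharaLHS r m) =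
      eE r m n := by
  rw [iharaLHS, eE, coeff_add, coeff_sum, prod_X_pow_eq_monomial_sum, coeff_monomial]
  congr 1
  · have hexp : ∀ j ∈ Icc 1 r, m j - 1 = n j - 1 ↔ m j = n j := fun j hj => by
      have := hm j hj
      have := hn j hj
      omega
    simp only [sum_single_eq_sum_single_iff, forall₂_congr hexp]
    congr
  · refine sum_congr rfl fun i hi => ?_
    rw [mem_Icc] at hi
    exact coeff_iharaLHS_summand hm hn hsum hi.1 (by omega)

/-- Lemma 3.1: the coefficient of `x1^{n1-1} ⋯ xr^{nr-1}` in
`x1^{m1-1} ∘ (x1^{m2-1} ⋯ x_{r-1}^{m_r-1})` equals `e(m1,...,mr; n1,...,nr)`. -/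
theorem ihara_coeff_eq_eE (r : ℕ) (hr : 1 ≤ r) (m : ℕ → ℕ)
    (hm : ∀ j ∈ Finset.Icc 1 r, 1 ≤ m j) (n : ℕ → ℕ)
    (hn : ∀ j ∈ Finset.Icc 1 r, 1 ≤ n j)
    (hsum : ∑ j ∈ Finset.Icc 1 r, n j = ∑ j ∈ Finset.Icc 1 r, m j) :
    MvPolynomial.coeff (∑ j ∈ Finset.Icc 1 r, Finsupp.single j (n j - 1)) (iharaLHS r m) =
      eE r m n :=
  ihara_coeff_eq_eE_general r m hm n hn hsum
end
end

section
/- Let N ≥ 1 and let p(x1,x2) be a homogeneous polynomial of degree N-2 with rational coefficients supported on monomials x1^{n1-1} x2^{n2-1} with n1, n2 odd and ≥ 3 (in particular p(x1,0) = p(0,x2) = 0). If p satisfies the period-polynomial relation p(x1,x2) - p(x2-x1,x2) + p(x2-x1,x1) = 0, then the coefficient vector (a_{n1,n2}) of p satisfies, for every pair (n1,n2) of odd integers ≥ 3 with n1+n2 = N: a_{n1,n2} + Σ_{(m1,m2)} a_{m1,m2} b_{n1,n2}^{m1} = 0, where the sum is over pairs (m1,m2) of odd integers ≥ 3 with m1+m2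 = N, and b_{n1,n2}^{m1} = (-1)^{n1} C(m1-1,n1-1) + (-1)^{n2-m1} C(m1-1,n2-1). -/
open MvPolynomial

noncomputable section

/-- `S_{N,2}`: pairs of odd integers `≥ 3` summing to `N`. -/
def Spair (N : ℕ) : Finset (ℕ × ℕ) :=
  (Finset.range (N + 1) ×ˢ Finset.range (N + 1)).filter fun q =>
    q.1 + q.2 = N ∧ Odd q.1 ∧ Odd q.2 ∧ 3 ≤ q.1 ∧ 3 ≤ q.2

/-- Substitution `(x1, x2) ↦ (x2 - x1, x2)`, in the variables `X 1, X 2`. -/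
def subA : ℕ → MvPolynomial ℕ ℚ := fun k =>
  if k = 1 then X 2 - X 1 else if k = 2 then X 2 else X k

/-- Substitution `(x1, x2) ↦ (x2 - x1, x1)`, in the variables `X 1, X 2`. -/
def subB : ℕ → MvPolynomial ℕ ℚ := fun k =>
  if k = 1 then X 2 - X 1 else if k = 2 then X 1 else X k

namespace PP

abbrev dd (a b : ℕ) : ℕ →₀ ℕ := Finsupp.single 1 a + Finsupp.single 2 b

lemma mem_Spair {N : ℕ} {q : ℕ × ℕ} (h : q ∈ Spair N) :
    q.1 + q.2 = N ∧ Odd q.1 ∧ Odd q.2 ∧ 3 ≤ q.1 ∧ 3 ≤ q.2 := by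
  simp only [Spair, Finset.mem_filter] at h
  exact h.2

lemma dd_eq_iff {a b a' b' : ℕ} : dd a b = dd a' b' ↔ a = a' ∧ b = b' := by
  constructor
  · intro h
    have h1 := DFunLike.congr_fun h 1
    have h2 := DFunLike.congr_fun h 2
    simp [Finsupp.single_apply] at h1 h2
    exact ⟨h1, h2⟩
  · rintro ⟨rfl, rfl⟩; rfl

lemma coeff_pair (a b j s : ℕ) :
    coeff (dd a b) ((X 1 : MvPolynomial ℕ ℚ) ^ j * X 2 ^ s)
      = if j = a ∧ s = b then 1 else 0 := by
  rw [X_pow_eq_monomial, X_pow_eq_monomial, monomial_mul, coeff_monomial, mul_one]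
  congr 1
  · simp only [eq_iff_iff]
    exact dd_eq_iff

lemma monomial_dd (c e : ℕ) (r : ℚ) :
    (monomial (dd c e) r : MvPolynomial ℕ ℚ) = C r * X 1 ^ c * X 2 ^ e := by
  have h1 : (monomial (dd c e) r : MvPolynomial ℕ ℚ)
      = monomial (Finsupp.single 1 c) r * monomial (Finsupp.single 2 e) 1 := by
    rw [monomial_mul, mul_one]
  rw [h1, ← X_pow_eq_monomial, ← C_mul_X_pow_eq_monomial]

lemma coeffA (a b c e : ℕ) (h : c + e = a + b) :
    coeff (dd a b) ((X 2 - X 1 : MvPolynomial ℕ ℚ) ^ c * X 2 ^ e)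
      = (-1 : ℚ) ^ a * (c.choose a : ℚ) := by
  rw [sub_pow, Finset.sum_mul, coeff_sum]
  have key : ∀ m ∈ Finset.range (c + 1),
      coeff (dd a b)
        ((-1 : MvPolynomial ℕ ℚ) ^ (m + c) * X 2 ^ m * X 1 ^ (c - m) * (c.choose m : MvPolynomial ℕ ℚ) * X 2 ^ e)
      = if m = c - a ∧ a ≤ c then (-1 : ℚ) ^ a * (c.choose a : ℚ) else 0 := by
    intro m hm
    rw [Finset.mem_range] at hm
    have hrw : ((-1 : MvPolynomial ℕ ℚ) ^ (m + c) * X 2 ^ m * X 1 ^ (c - m) * (c.choose m : MvPolynomial ℕ ℚ) * X 2 ^ e)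
        = C ((-1 : ℚ) ^ (m + c) * (c.choose m : ℚ)) * (X 1 ^ (c - m) * X 2 ^ (m + e)) := by
      rw [map_mul, map_pow, map_neg, map_one, map_natCast, pow_add (X 2 : MvPolynomial ℕ ℚ)]
      ring
    rw [hrw, coeff_C_mul, coeff_pair]
    by_cases hc : c - m = a ∧ m + e = b
    · rw [if_pos hc]
      have hma : m = c - a ∧ a ≤ c := by omega
      rw [if_pos hma, mul_one]
      have h1 : m + c = a + 2 * m := by omega
      have h2 : c.choose m = c.choose a := by
        rw [show m = c - a by omega, Nat.choose_symm (by omega)]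
      have he : ((-1 : ℚ)) ^ (2 * m) = 1 := Even.neg_one_pow ⟨m, by ring⟩
      rw [h1, h2, pow_add, he]
      ring
    · rw [if_neg hc, mul_zero]
      have : ¬(m = c - a ∧ a ≤ c) := by
        rintro ⟨rfl, hac⟩
        exact hc ⟨by omega, by omega⟩
      rw [if_neg this]
  rw [Finset.sum_congr rfl key]
  by_cases hac : a ≤ c
  · simp only [hac, and_true]
    rw [Finset.sum_ite_eq' (Finset.range (c + 1)) (c - a)]
    rw [if_pos (Finset.mem_range.mpr (by omega))]
  · have : ∀ m ∈ Finset.range (c + 1), (if m = c - a ∧ a ≤ c then (-1 : ℚ) ^ a * (c.choose a : ℚ) else 0) = 0 := by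
      intro m _; rw [if_neg (by omega)]
    rw [Finset.sum_congr rfl this, Finset.sum_const_zero, Nat.choose_eq_zero_of_lt (by omega), Nat.cast_zero, mul_zero]

lemma coeffB (a b c e : ℕ) (h : c + e = a + b) :
    coeff (dd a b) ((X 2 - X 1 : MvPolynomial ℕ ℚ) ^ c * X 1 ^ e)
      = (-1 : ℚ) ^ (b + c) * (c.choose b : ℚ) := by
  rw [sub_pow, Finset.sum_mul, coeff_sum]
  have key : ∀ m ∈ Finset.range (c + 1),
      coeff (dd a b)
        ((-1 : MvPolynomial ℕ ℚ) ^ (m + c) * X 2 ^ m * X 1 ^ (c - m) * (c.choose m : MvPolynomial ℕ ℚ) * X 1 ^ e)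
      = if m = b ∧ b ≤ c then (-1 : ℚ) ^ (b + c) * (c.choose b : ℚ) else 0 := by
    intro m hm
    rw [Finset.mem_range] at hm
    have hrw : ((-1 : MvPolynomial ℕ ℚ) ^ (m + c) * X 2 ^ m * X 1 ^ (c - m) * (c.choose m : MvPolynomial ℕ ℚ) * X 1 ^ e)
        = C ((-1 : ℚ) ^ (m + c) * (c.choose m : ℚ)) * (X 1 ^ (c - m + e) * X 2 ^ m) := by
      rw [map_mul, map_pow, map_neg, map_one, map_natCast, pow_add (X 1 : MvPolynomial ℕ ℚ)]
      ring
    rw [hrw, coeff_C_mul, coeff_pair]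
    by_cases hc : c - m + e = a ∧ m = b
    · rw [if_pos hc, if_pos ⟨hc.2, by omega⟩, hc.2, mul_one]
    · rw [if_neg hc, mul_zero]
      rw [if_neg]
      rintro ⟨rfl, hbc⟩
      exact hc ⟨by omega, rfl⟩
  rw [Finset.sum_congr rfl key]
  by_cases hbc : b ≤ c
  · simp only [hbc, and_true]
    rw [Finset.sum_ite_eq' (Finset.range (c + 1)) b]
    rw [if_pos (Finset.mem_range.mpr (by omega))]
  · have : ∀ m ∈ Finset.range (c + 1),
        (if m = b ∧ b ≤ c then (-1 : ℚ) ^ (b + c) * (c.choose b : ℚ) else 0) = 0 := by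
      intro m _; rw [if_neg (by omega)]
    rw [Finset.sum_congr rfl this, Finset.sum_const_zero,
      Nat.choose_eq_zero_of_lt (by omega), Nat.cast_zero, mul_zero]

lemma zpow_parity (n2 m1 : ℕ) (h2 : 1 ≤ n2) (h3 : 1 ≤ m1) :
    (-1 : ℚ) ^ ((n2 : ℤ) - (m1 : ℤ)) = (-1 : ℚ) ^ ((n2 - 1) + (m1 - 1)) := by
  rcases Nat.even_or_odd ((n2 - 1) + (m1 - 1)) with h | h
  · rw [h.neg_one_pow]
    have he : Even ((n2 : ℤ) - (m1 : ℤ)) := by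
      obtain ⟨k, hk⟩ := h
      exact ⟨((n2 : ℤ) - m1) / 2, by omega⟩
    rw [he.neg_one_zpow]
  · rw [h.neg_one_pow]
    have he : Odd ((n2 : ℤ) - (m1 : ℤ)) := by
      obtain ⟨k, hk⟩ := h
      exact ⟨((n2 : ℤ) - m1 - 1) / 2, by omega⟩
    rw [he.neg_one_zpow]

lemma bb_eq (n1 n2 m1 : ℕ) (h1 : 3 ≤ n1) (h2 : 3 ≤ n2) (h3 : 3 ≤ m1) :
    bb n1 n2 m1 = (-1 : ℚ) ^ ((n2 - 1) + (m1 - 1)) * ((m1 - 1).choose (n2 - 1) : ℚ)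
      - (-1 : ℚ) ^ (n1 - 1) * ((m1 - 1).choose (n1 - 1) : ℚ) := by
  have e1 : (-1 : ℚ) ^ n1 = -(-1 : ℚ) ^ (n1 - 1) := by
    have hh : n1 - 1 + 1 = n1 := by omega
    conv_lhs => rw [← hh]
    rw [pow_succ]; ring
  rw [bb, e1, zpow_parity n2 m1 (by omega) (by omega)]
  ring

end PP

/-- If `p` is supported on monomials `x1^{n1-1} x2^{n2-1}` with `(n1,n2) ∈ S_{N,2}` and satisfies
the period polynomial relation `p(x1,x2) - p(x2-x1,x2) + p(x2-x1,x1) = 0`, then its coefficient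
vector is a left annihilator of `E_{N,2}`:
`a_{n1,n2} + Σ_{(m1,m2) ∈ S_{N,2}} a_{m1,m2} b_{n1,n2}^{m1} = 0` for all `(n1,n2) ∈ S_{N,2}`. -/
theorem period_poly_left_annihilator (N : ℕ) (hN : 1 ≤ N) (p : MvPolynomial ℕ ℚ)
    (hsupp : ∀ d ∈ p.support, ∃ q ∈ Spair N,
      d = Finsupp.single 1 (q.1 - 1) + Finsupp.single 2 (q.2 - 1))
    (hrel : p - aeval subA p + aeval subB p = 0) :
    ∀ q ∈ Spair N,
      MvPolynomial.coeff (Finsupp.single 1 (q.1 - 1) + Finsupp.single 2 (q.2 - 1)) p +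
        ∑ q' ∈ Spair N,
          MvPolynomial.coeff (Finsupp.single 1 (q'.1 - 1) + Finsupp.single 2 (q'.2 - 1)) p *
            bb q.1 q.2 q'.1 = 0 := by
  intro q hq
  obtain ⟨hsum, ho1, ho2, h3a, h3b⟩ := PP.mem_Spair hq
  set a : ℕ × ℕ → ℚ := fun r => coeff (PP.dd (r.1 - 1) (r.2 - 1)) p with ha
  have hp : p = ∑ r ∈ Spair N, monomial (PP.dd (r.1 - 1) (r.2 - 1)) (a r) := by
    apply MvPolynomial.ext
    intro v
    rw [coeff_sum]
    simp only [coeff_monomial]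
    by_cases hv : v ∈ p.support
    · obtain ⟨r0, hr0, hveq⟩ := hsupp v hv
      obtain ⟨_, _, _, hr0a, hr0b⟩ := PP.mem_Spair hr0
      rw [Finset.sum_eq_single_of_mem r0 hr0]
      · rw [if_pos hveq.symm, ha]
        simp only
        rw [hveq]
      · intro r hr hne
        obtain ⟨_, _, _, hra, hrb⟩ := PP.mem_Spair hr
        rw [if_neg]
        intro hcontr
        rw [hveq] at hcontr
        obtain ⟨e1, e2⟩ := PP.dd_eq_iff.mp hcontr
        exact hne (Prod.ext (by omega) (by omega))
    · have h0 : coeff v p = 0 := MvPolynomial.notMem_support_iff.mp hv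
      rw [h0]
      symm
      apply Finset.sum_eq_zero
      intro r hr
      split
      · next heq =>
          rw [ha]; simp only; rw [heq, h0]
      · rfl
  have hdegs : ∀ r ∈ Spair N, (r.1 - 1) + (r.2 - 1) = (q.1 - 1) + (q.2 - 1) := by
    intro r hr
    obtain ⟨h1, _, _, h2, h3⟩ := PP.mem_Spair hr
    omega
  have hA : coeff (PP.dd (q.1 - 1) (q.2 - 1)) (aeval subA p)
      = ∑ r ∈ Spair N, a r * ((-1 : ℚ) ^ (q.1 - 1) * ((r.1 - 1).choose (q.1 - 1) : ℚ)) := by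
    conv_lhs => rw [hp]
    rw [map_sum, coeff_sum]
    refine Finset.sum_congr rfl fun r hr => ?_
    rw [PP.monomial_dd, map_mul, map_mul, map_pow, map_pow, aeval_X, aeval_X, aeval_C,
      MvPolynomial.algebraMap_eq]
    have h1 : subA 1 = X 2 - X 1 := by simp [subA]
    have h2 : subA 2 = X 2 := by simp [subA]
    rw [h1, h2, mul_assoc, coeff_C_mul, PP.coeffA _ _ _ _ (hdegs r hr)]
  have hB : coeff (PP.dd (q.1 - 1) (q.2 - 1)) (aeval subB p)
      = ∑ r ∈ Spair N, a r * ((-1 : ℚ) ^ ((q.2 - 1) + (r.1 - 1)) * ((r.1 - 1).choose (q.2 - 1) : ℚ)) := by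
    conv_lhs => rw [hp]
    rw [map_sum, coeff_sum]
    refine Finset.sum_congr rfl fun r hr => ?_
    rw [PP.monomial_dd, map_mul, map_mul, map_pow, map_pow, aeval_X, aeval_X, aeval_C,
      MvPolynomial.algebraMap_eq]
    have h1 : subB 1 = X 2 - X 1 := by simp [subB]
    have h2 : subB 2 = X 1 := by simp [subB]
    rw [h1, h2, mul_assoc, coeff_C_mul, PP.coeffB _ _ _ _ (hdegs r hr)]
  have hco := congrArg (coeff (PP.dd (q.1 - 1) (q.2 - 1))) hrel
  simp only [coeff_add, coeff_sub, coeff_zero] at hco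
  rw [hA, hB] at hco
  have hgoal : a q + ∑ r ∈ Spair N, a r * bb q.1 q.2 r.1 = 0 := by
    have hbbsum : ∑ r ∈ Spair N, a r * bb q.1 q.2 r.1
        = ∑ r ∈ Spair N,
            (a r * ((-1 : ℚ) ^ ((q.2 - 1) + (r.1 - 1)) * ((r.1 - 1).choose (q.2 - 1) : ℚ))
              - a r * ((-1 : ℚ) ^ (q.1 - 1) * ((r.1 - 1).choose (q.1 - 1) : ℚ))) := by
      refine Finset.sum_congr rfl fun r hr => ?_
      obtain ⟨_, _, _, h3a', _⟩ := PP.mem_Spair hr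
      rw [PP.bb_eq q.1 q.2 r.1 h3a h3b h3a']
      ring
    rw [hbbsum, Finset.sum_sub_distrib]
    linarith [hco]
  exact hgoal
end
end

section
/- Let N be even and let v = (a_{n1,n2}) be a rational vector indexed by pairs (n1,n2) of odd integers ≥ 3 with n1+n2 = N. If for every (n1,n2) ∈ S_{N,2} one has a_{n1,n2} + Σ_{(m1,m2) ∈ S_{N,2}} a_{m1,m2} b_{n1,n2}^{m1} = 0, then a_{n1,n2} = -a_{n2,n1} for all (n1,n2) ∈ S_{N,2}. -/
noncomputable section

lemma bb_antisymm {n n' m : ℕ} (hn : Odd n) (hn' : Odd n') (hm : Odd m) :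
    bb n n' m + bb n' n m = 0 := by
  have h1 : (-1 : ℚ) ^ n = -1 := hn.neg_one_pow
  have h2 : (-1 : ℚ) ^ n' = -1 := hn'.neg_one_pow
  have h3 : (-1 : ℚ) ^ ((n' : ℤ) - (m : ℤ)) = 1 := by
    apply Even.neg_one_zpow
    rcases hn' with ⟨k, hk⟩
    rcases hm with ⟨l, hl⟩
    exact ⟨(k : ℤ) - l, by push_cast [hk, hl]; ring⟩
  have h4 : (-1 : ℚ) ^ ((n : ℤ) - (m : ℤ)) = 1 := by
    apply Even.neg_one_zpow
    rcases hn with ⟨k, hk⟩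
    rcases hm with ⟨l, hl⟩
    exact ⟨(k : ℤ) - l, by push_cast [hk, hl]; ring⟩
  simp only [bb, h1, h2, h3, h4]
  ring

lemma Spair_swap {N : ℕ} {q : ℕ × ℕ} (h : q ∈ Spair N) : q.swap ∈ Spair N := by
  simp only [Spair, Finset.mem_filter, Finset.mem_product, Finset.mem_range,
    Prod.fst_swap, Prod.snd_swap] at h ⊢
  obtain ⟨⟨h1, h2⟩, h3, h4, h5, h6, h7⟩ := h
  exact ⟨⟨h2, h1⟩, by omega, h5, h4, h7, h6⟩

lemma Spair_odd {N : ℕ} {q : ℕ × ℕ} (h : q ∈ Spair N) : Odd q.1 ∧ Odd q.2 := by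
  simp only [Spair, Finset.mem_filter] at h
  exact ⟨h.2.2.1, h.2.2.2.1⟩

/-- If a vector `(a_{n1,n2})` indexed by `S_{N,2}` (with `N` even) is a left annihilator of
`E_{N,2}`, then it is antisymmetric: `a_{n1,n2} = -a_{n2,n1}`. -/
theorem left_annihilator_antisymm (N : ℕ) (hN : Even N) (a : ℕ → ℕ → ℚ)
    (h : ∀ q ∈ Spair N, a q.1 q.2 + ∑ q' ∈ Spair N, a q'.1 q'.2 * bb q.1 q.2 q'.1 = 0) :
    ∀ q ∈ Spair N, a q.1 q.2 = -a q.2 q.1 := by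
  intro q hq
  have hq' := Spair_swap hq
  have e1 := h q hq
  have e2 := h q.swap hq'
  simp only [Prod.fst_swap, Prod.snd_swap] at e2
  have hsum : ∑ q' ∈ Spair N, a q'.1 q'.2 * bb q.1 q.2 q'.1
      + ∑ q' ∈ Spair N, a q'.1 q'.2 * bb q.2 q.1 q'.1 = 0 := by
    rw [← Finset.sum_add_distrib]
    apply Finset.sum_eq_zero
    intro x hx
    rw [← mul_add, bb_antisymm (Spair_odd hq).1 (Spair_odd hq).2 (Spair_odd hx).1, mul_zero]
  linarith
end
end

section
/- Let p(x1,...,xr) be a polynomial satisfying p(x1,x2,x3,...,xr) + p(x2,x1,x3,...,xr) = 0. Define for 1 ≤ i ≤ r-1 the operator (p|σ^{(i)})(x1,...,xr) = p(x_{i+1}-x_i, x1,...,x̂_{i+1},...,xr) - p(x_{i+1}-x_i, x1,...,x̂_i,...,xr) (hat means omit that variable, the remaining variables placed in order after the first argument). Then for all r-1 ≥ i > j ≥ 2: p|σ^{(j)}σ^{(i)} + p|σ^{(i)}σ^{(j-1)} = 0. -/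
open MvPolynomial

noncomputable section

/-- The first substitution in `σ^{(i)}`: `p ↦ p(x_{i+1}-x_i, x1,...,x̂_{i+1},...,xr)`,
in 1-indexed variables. -/
def sub1 (i : ℕ) : ℕ → MvPolynomial ℕ ℚ := fun k =>
  if k = 1 then X (i + 1) - X i else if k ≤ i + 1 then X (k - 1) else X k

/-- The second substitution in `σ^{(i)}`: `p ↦ p(x_{i+1}-x_i, x1,...,x̂_i,...,xr)`. -/
def sub2 (i : ℕ) : ℕ → MvPolynomial ℕ ℚ := fun k =>
  if k = 1 then X (i + 1) - X i else if k ≤ i then X (k - 1) else X k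

/-- The operator `σ^{(i)}`:
`(p|σ^{(i)})(x1,...,xr) = p(x_{i+1}-x_i, x1,...,x̂_{i+1},...,xr) - p(x_{i+1}-x_i, x1,...,x̂_i,...,xr)`. -/
def sigmaOp (i : ℕ) (p : MvPolynomial ℕ ℚ) : MvPolynomial ℕ ℚ :=
  aeval (sub1 i) p - aeval (sub2 i) p

/-- The substitution swapping the first two (1-indexed) variables. -/
def swap12 : ℕ → MvPolynomial ℕ ℚ := fun k =>
  if k = 1 then X 2 else if k = 2 then X 1 else X k

lemma aeval_agree (r : ℕ) (p : MvPolynomial ℕ ℚ)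
    (hvars : ∀ d ∈ p.support, ∀ k ∈ d.support, 1 ≤ k ∧ k ≤ r)
    (f g : ℕ → MvPolynomial ℕ ℚ) (h : ∀ k, 1 ≤ k → k ≤ r → f k = g k) :
    aeval f p = aeval g p := by
  rw [aeval_def, aeval_def]
  apply eval₂_congr
  intro k c hkc hc
  have := hvars c (by simpa [mem_support_iff] using hc) k hkc
  exact h k this.1 this.2

lemma aeval_comp (f g : ℕ → MvPolynomial ℕ ℚ) (p : MvPolynomial ℕ ℚ) :
    aeval f (aeval g p) = aeval (fun k => aeval f (g k)) p :=
  aeval_bind₁ f g p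

lemma aeval_swap_neg (r : ℕ) (p : MvPolynomial ℕ ℚ)
    (hvars : ∀ d ∈ p.support, ∀ k ∈ d.support, 1 ≤ k ∧ k ≤ r)
    (hanti : aeval swap12 p = -p)
    (τ σ : ℕ → MvPolynomial ℕ ℚ)
    (h : ∀ k, 1 ≤ k → k ≤ r → τ k = aeval σ (swap12 k)) :
    aeval τ p = - aeval σ p := by
  rw [aeval_agree r p hvars τ (fun k => aeval σ (swap12 k)) h, ← aeval_comp, hanti, map_neg]

set_option maxHeartbeats 1000000 in
lemma pw1 (r i j : ℕ) (hj : 2 ≤ j) (hij : j < i) (hr : i + 1 ≤ r) :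
    ∀ k, 1 ≤ k → k ≤ r → aeval (sub1 i) (sub1 j k)
      = aeval (fun m => aeval (sub1 (j - 1)) (sub1 i m)) (swap12 k) := by
  intro k hk1 hkr
  simp only [sub1, sub2, swap12]
  split_ifs <;>
    (try simp only [sub1, sub2, map_sub, aeval_X]) <;> (try split_ifs) <;>
    (try simp only [sub1, sub2, map_sub, aeval_X]) <;> (try split_ifs) <;>
    (try simp only [sub1, sub2, map_sub, aeval_X]) <;> (try split_ifs) <;>
    first
    | rfl
    | (exfalso; omega)
    | (congr 1 <;> first | omega | (congr 1 <;> omega))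

set_option maxHeartbeats 1000000 in
lemma pw2 (r i j : ℕ) (hj : 2 ≤ j) (hij : j < i) (hr : i + 1 ≤ r) :
    ∀ k, 1 ≤ k → k ≤ r → aeval (sub1 i) (sub2 j k)
      = aeval (fun m => aeval (sub2 (j - 1)) (sub1 i m)) (swap12 k) := by
  intro k hk1 hkr
  simp only [sub1, sub2, swap12]
  split_ifs <;>
    (try simp only [sub1, sub2, map_sub, aeval_X]) <;> (try split_ifs) <;>
    (try simp only [sub1, sub2, map_sub, aeval_X]) <;> (try split_ifs) <;>
    (try simp only [sub1, sub2, map_sub, aeval_X]) <;> (try split_ifs) <;>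
    first
    | rfl
    | (exfalso; omega)
    | (congr 1 <;> first | omega | (congr 1 <;> omega))

set_option maxHeartbeats 1000000 in
lemma pw3 (r i j : ℕ) (hj : 2 ≤ j) (hij : j < i) (hr : i + 1 ≤ r) :
    ∀ k, 1 ≤ k → k ≤ r → aeval (sub2 i) (sub2 j k)
      = aeval (fun m => aeval (sub2 (j - 1)) (sub2 i m)) (swap12 k) := by
  intro k hk1 hkr
  simp only [sub1, sub2, swap12]
  split_ifs <;>
    (try simp only [sub1, sub2, map_sub, aeval_X]) <;> (try split_ifs) <;>
    (try simp only [sub1, sub2, map_sub, aeval_X]) <;> (try split_ifs) <;>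
    (try simp only [sub1, sub2, map_sub, aeval_X]) <;> (try split_ifs) <;>
    first
    | rfl
    | (exfalso; omega)
    | (congr 1 <;> first | omega | (congr 1 <;> omega))

set_option maxHeartbeats 1000000 in
lemma pw4 (r i j : ℕ) (hj : 2 ≤ j) (hij : j < i) (hr : i + 1 ≤ r) :
    ∀ k, 1 ≤ k → k ≤ r → aeval (sub1 (j - 1)) (sub2 i k)
      = aeval (fun m => aeval (sub2 i) (sub1 j m)) (swap12 k) := by
  intro k hk1 hkr
  simp only [sub1, sub2, swap12]
  split_ifs <;>
    (try simp only [sub1, sub2, map_sub, aeval_X]) <;> (try split_ifs) <;>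
    (try simp only [sub1, sub2, map_sub, aeval_X]) <;> (try split_ifs) <;>
    (try simp only [sub1, sub2, map_sub, aeval_X]) <;> (try split_ifs) <;>
    first
    | rfl
    | (exfalso; omega)
    | (congr 1 <;> first | omega | (congr 1 <;> omega))

/-- For a polynomial `p` in the variables `x1,...,xr` which is antisymmetric in its first two
variables, one has `p|σ^{(j)}σ^{(i)} + p|σ^{(i)}σ^{(j-1)} = 0` for all `r-1 ≥ i > j ≥ 2`
(operators applied left to right). -/
theorem sigma_commutation (r : ℕ) (p : MvPolynomial ℕ ℚ)
    (hvars : ∀ d ∈ p.support, ∀ k ∈ d.support, 1 ≤ k ∧ k ≤ r)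
    (hanti : aeval swap12 p = -p)
    (i j : ℕ) (hj : 2 ≤ j) (hij : j < i) (hi : i ≤ r - 1) :
    sigmaOp i (sigmaOp j p) + sigmaOp (j - 1) (sigmaOp i p) = 0 := by
  have hr : i + 1 ≤ r := by omega
  have h1 : aeval (fun k => aeval (sub1 i) (sub1 j k)) p
      = - aeval (fun k => aeval (sub1 (j - 1)) (sub1 i k)) p :=
    aeval_swap_neg r p hvars hanti _ _ (pw1 r i j hj hij hr)
  have h2 : aeval (fun k => aeval (sub1 i) (sub2 j k)) p
      = - aeval (fun k => aeval (sub2 (j - 1)) (sub1 i k)) p :=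
    aeval_swap_neg r p hvars hanti _ _ (pw2 r i j hj hij hr)
  have h3 : aeval (fun k => aeval (sub2 i) (sub2 j k)) p
      = - aeval (fun k => aeval (sub2 (j - 1)) (sub2 i k)) p :=
    aeval_swap_neg r p hvars hanti _ _ (pw3 r i j hj hij hr)
  have h4 : aeval (fun k => aeval (sub1 (j - 1)) (sub2 i k)) p
      = - aeval (fun k => aeval (sub2 i) (sub1 j k)) p :=
    aeval_swap_neg r p hvars hanti _ _ (pw4 r i j hj hij hr)
  simp only [sigmaOp, map_sub, aeval_comp]
  linear_combination h1 - h2 + h3 - h4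
end
end

section
/- Let p(x1,...,xr) satisfy the relation p(x1,...,xr) + p(x2-x1, x2, x3,...,xr) - p(x2-x1, x1, x3,...,xr) = 0, i.e., p|(1+σ^{(1)}) = 0 where σ^{(i)} is as defined. Then for all 2 ≤ j ≤ r-1: p|σ^{(j)}σ^{(j)} + p|σ^{(j)}σ^{(j-1)} = 0. -/
open MvPolynomial

noncomputable section

/- ### Auxiliary machinery -/

/-- A substitution with prescribed first two slots. -/
def slotf (a b : MvPolynomial ℕ ℚ) (t : ℕ → MvPolynomial ℕ ℚ) : ℕ → MvPolynomial ℕ ℚ :=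
  fun k => if k = 1 then a else if k = 2 then b else t k

/-- Common generalization of `sub1` and `sub2`. -/
def subG (i ℓ : ℕ) : ℕ → MvPolynomial ℕ ℚ := fun k =>
  if k = 1 then X (i + 1) - X i else if k ≤ ℓ then X (k - 1) else X k

/-- The common tail of the composed substitutions. -/
def tailT (j : ℕ) (v : MvPolynomial ℕ ℚ) : ℕ → MvPolynomial ℕ ℚ := fun k =>
  if k = j + 1 then v else if k ≤ j + 1 then X (k - 2) else X k

lemma aeval_comp_subst (t s : ℕ → MvPolynomial ℕ ℚ) (p : MvPolynomial ℕ ℚ) :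
    aeval t (aeval s p) = aeval (fun k => aeval t (s k)) p :=
  comp_aeval_apply s (aeval t) p

lemma subG_one (i ℓ : ℕ) : subG i ℓ 1 = X (i + 1) - X i := by simp [subG]

lemma subG_mid (i ℓ k : ℕ) (h1 : k ≠ 1) (h2 : k ≤ ℓ) : subG i ℓ k = X (k - 1) := by
  simp [subG, h1, h2]

lemma subG_high (i ℓ k : ℕ) (h1 : k ≠ 1) (h2 : ¬ k ≤ ℓ) : subG i ℓ k = X k := by
  simp [subG, h1, h2]

lemma slotf_one (a b : MvPolynomial ℕ ℚ) (t : ℕ → MvPolynomial ℕ ℚ) : slotf a b t 1 = a := rfl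

lemma slotf_two (a b : MvPolynomial ℕ ℚ) (t : ℕ → MvPolynomial ℕ ℚ) : slotf a b t 2 = b := rfl

lemma slotf_other (a b : MvPolynomial ℕ ℚ) (t : ℕ → MvPolynomial ℕ ℚ) (k : ℕ)
    (h1 : k ≠ 1) (h2 : k ≠ 2) : slotf a b t k = t k := by simp [slotf, h1, h2]

/-- The basic relation, composed with an arbitrary substitution with first two slots `a`, `b`. -/
lemma rel' (p : MvPolynomial ℕ ℚ) (hrel : p + sigmaOp 1 p = 0)
    (a b : MvPolynomial ℕ ℚ) (t : ℕ → MvPolynomial ℕ ℚ) :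
    aeval (slotf a b t) p + aeval (slotf (b - a) a t) p - aeval (slotf (b - a) b t) p = 0 := by
  have h : aeval (slotf a b t) (p + sigmaOp 1 p) = 0 := by rw [hrel]; exact map_zero _
  rw [map_add] at h
  unfold sigmaOp at h
  rw [map_sub, aeval_comp_subst, aeval_comp_subst] at h
  have e1 : (fun k => aeval (slotf a b t) (sub1 1 k)) = slotf (b - a) a t := by
    funext k
    match k with
    | 0 => simp [sub1, slotf]
    | 1 => simp [sub1, slotf]
    | 2 => simp [sub1, slotf]
    | (n + 3) =>
      simp [sub1, slotf, show (n : ℕ) + 3 ≠ 1 by omega, show ¬((n : ℕ) + 3 ≤ 2) by omega,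
        show (n : ℕ) + 3 ≠ 2 by omega]
  have e2 : (fun k => aeval (slotf a b t) (sub2 1 k)) = slotf (b - a) b t := by
    funext k
    match k with
    | 0 => simp [sub2, slotf]
    | 1 => simp [sub2, slotf]
    | 2 => simp [sub2, slotf, show ¬((2:ℕ) ≤ 1) by omega]
    | (n + 3) =>
      simp [sub2, slotf, show (n : ℕ) + 3 ≠ 1 by omega, show ¬((n : ℕ) + 3 ≤ 1) by omega,
        show (n : ℕ) + 3 ≠ 2 by omega]
  rw [e1, e2] at h
  linear_combination h

/-- Antisymmetry in the first two slots. -/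
lemma antisym (p : MvPolynomial ℕ ℚ) (hrel : p + sigmaOp 1 p = 0)
    (a c : MvPolynomial ℕ ℚ) (t : ℕ → MvPolynomial ℕ ℚ) :
    aeval (slotf a c t) p + aeval (slotf c a t) p = 0 := by
  have h1 := rel' p hrel a (a + c) t
  rw [show a + c - a = c from by ring] at h1
  have h2 := rel' p hrel c (a + c) t
  rw [show a + c - c = a from by ring] at h2
  linear_combination h1 + h2

/-- The three-term consequence. -/
lemma flem (p : MvPolynomial ℕ ℚ) (hrel : p + sigmaOp 1 p = 0)
    (a c : MvPolynomial ℕ ℚ) (t : ℕ → MvPolynomial ℕ ℚ) :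
    aeval (slotf a c t) p - aeval (slotf (a + c) c t) p + aeval (slotf (a + c) a t) p = 0 := by
  have h1 := rel' p hrel a (a + c) t
  rw [show a + c - a = c from by ring] at h1
  have h2 := antisym p hrel a (a + c) t
  have h3 := antisym p hrel c a t
  have h4 := antisym p hrel c (a + c) t
  linear_combination -h1 + h2 + h3 - h4

/-- The composed substitution in slot form. -/
lemma comp_eq (j ℓ i ℓ' : ℕ) (hj : 2 ≤ j) (hl1 : j ≤ ℓ) (hl2 : ℓ ≤ j + 1)
    (hl3 : j - 1 ≤ ℓ') (hl4 : ℓ' ≤ j + 1) :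
    (fun k => aeval (subG i ℓ') (subG j ℓ k)) =
      slotf (subG i ℓ' (j + 1) - subG i ℓ' j) (X (i + 1) - X i)
        (tailT j (aeval (subG i ℓ') (subG j ℓ (j + 1)))) := by
  funext k
  by_cases hk1 : k = 1
  · subst hk1
    rw [subG_one, map_sub, aeval_X, aeval_X, slotf_one]
  by_cases hk2 : k = 2
  · subst hk2
    rw [subG_mid j ℓ 2 (by omega) (by omega), aeval_X, slotf_two]
    norm_num
    exact subG_one i ℓ'
  by_cases hkj : k = j + 1
  · subst hkj
    rw [slotf_other _ _ _ _ (by omega) (by omega)]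
    simp [tailT]
  rw [slotf_other _ _ _ _ hk1 hk2]
  by_cases hkle : k ≤ j + 1
  · rw [subG_mid j ℓ k hk1 (by omega), aeval_X, subG_mid i ℓ' (k - 1) (by omega) (by omega)]
    simp only [tailT, if_neg hkj, if_pos hkle]
    exact congrArg X (by omega : k - 1 - 1 = k - 2)
  · rw [subG_high j ℓ k hk1 (by omega), aeval_X, subG_high i ℓ' k hk1 (by omega)]
    simp only [tailT, if_neg hkj, if_neg hkle]

/-- For a polynomial `p` in the variables `x1,...,xr` satisfying `p|(1+σ^{(1)}) = 0`, one has
`p|σ^{(j)}σ^{(j)} + p|σ^{(j)}σ^{(j-1)} = 0` for all `2 ≤ j ≤ r-1`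
(operators applied left to right). -/
theorem sigma_commutation_diag (r : ℕ) (p : MvPolynomial ℕ ℚ)
    (hvars : ∀ d ∈ p.support, ∀ k ∈ d.support, 1 ≤ k ∧ k ≤ r)
    (hrel : p + sigmaOp 1 p = 0) :
    ∀ j, 2 ≤ j → j ≤ r - 1 →
      sigmaOp j (sigmaOp j p) + sigmaOp (j - 1) (sigmaOp j p) = 0 := by
  intro j hj2 hjr
  have hs1 : ∀ i : ℕ, sub1 i = subG i (i + 1) := fun _ => rfl
  have hs2 : ∀ i : ℕ, sub2 i = subG i i := fun _ => rfl
  have hjj : j - 1 + 1 = j := by omega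
  -- value computations
  have vA : subG j (j + 1) (j + 1) = X j := by
    rw [subG_mid j (j + 1) (j + 1) (by omega) le_rfl]; simp
  have vB : subG j (j + 1) j = X (j - 1) :=
    subG_mid j (j + 1) j (by omega) (by omega)
  have vC : subG j j (j + 1) = X (j + 1) :=
    subG_high j j (j + 1) (by omega) (by omega)
  have vD : subG j j j = X (j - 1) := subG_mid j j j (by omega) le_rfl
  have vE : subG (j - 1) j (j + 1) = X (j + 1) :=
    subG_high (j - 1) j (j + 1) (by omega) (by omega)
  have vF : subG (j - 1) j j = X (j - 1) := subG_mid (j - 1) j j (by omega) le_rfl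
  have vG : subG (j - 1) (j - 1) (j + 1) = X (j + 1) :=
    subG_high (j - 1) (j - 1) (j + 1) (by omega) (by omega)
  have vH : subG (j - 1) (j - 1) j = X j :=
    subG_high (j - 1) (j - 1) j (by omega) (by omega)
  have hsum : (X (j + 1) - X (j - 1) : MvPolynomial ℕ ℚ)
      = (X j - X (j - 1)) + (X (j + 1) - X j) := by ring
  -- the eight composed substitutions
  have hM1 := comp_eq j (j + 1) j (j + 1) hj2 (by omega) le_rfl (by omega) le_rfl
  rw [vA, vB, aeval_X, vB] at hM1
  have hM2 := comp_eq j j j (j + 1) hj2 le_rfl (by omega) (by omega) le_rfl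
  rw [vA, vB, vC, aeval_X, vA] at hM2
  have hM3 := comp_eq j (j + 1) j j hj2 (by omega) le_rfl (by omega) (by omega)
  rw [vA, vC, vD, aeval_X, vD, hsum] at hM3
  have hM4 := comp_eq j j j j hj2 le_rfl (by omega) (by omega) (by omega)
  rw [vC, vD, aeval_X, vC, hsum] at hM4
  have hM5 := comp_eq j (j + 1) (j - 1) j hj2 (by omega) le_rfl (by omega) (by omega)
  rw [vA, vE, vF, aeval_X, vF, hsum, hjj] at hM5
  have hM6 := comp_eq j j (j - 1) j hj2 le_rfl (by omega) (by omega) (by omega)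
  rw [vC, vE, vF, aeval_X, vE, hsum, hjj] at hM6
  have hM7 := comp_eq j (j + 1) (j - 1) (j - 1) hj2 (by omega) le_rfl le_rfl (by omega)
  rw [vA, vG, vH, aeval_X, vH, hjj] at hM7
  have hM8 := comp_eq j j (j - 1) (j - 1) hj2 le_rfl (by omega) le_rfl (by omega)
  rw [vC, vG, vH, aeval_X, vG, hjj] at hM8
  -- expand the goal
  unfold sigmaOp
  rw [hs1 j, hs2 j, hs1 (j - 1), hs2 (j - 1), hjj]
  rw [map_sub, map_sub, map_sub, map_sub]
  simp only [aeval_comp_subst]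
  rw [hM1, hM2, hM3, hM4, hM5, hM6, hM7, hM8]
  -- combine the relations
  have h1 := flem p hrel (X j - X (j - 1)) (X (j + 1) - X j) (tailT j (X (j - 1)))
  have h2 := antisym p hrel (X j - X (j - 1)) (X (j + 1) - X j) (tailT j (X j))
  have h3 := flem p hrel (X j - X (j - 1)) (X (j + 1) - X j) (tailT j (X (j + 1)))
  have h4 := antisym p hrel (X j - X (j - 1)) (X (j + 1) - X j) (tailT j (X (j + 1)))
  linear_combination h1 - h2 - h3 + h4

end
end

section
/- Let r ≥ 3 and let σ = σ^{(1)} + ... + σ^{(r-1)} (acting by linearity). If a polynomial p in r variables satisfies p|(1 + σ^{(1)}) = 0 and p|(σ^{(j)}σ^{(i)} + σ^{(i)}σ^{(j-1)}) = 0 for all r-1 ≥ i ≥ j ≥ 2, then p|σ|(1+σ) = 0. -/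
open MvPolynomial Finset

noncomputable section

/-- The full operator `σ = σ^{(1)} + ... + σ^{(r-1)}`. -/
def sigmaSum (r : ℕ) (p : MvPolynomial ℕ ℚ) : MvPolynomial ℕ ℚ :=
  ∑ i ∈ Finset.Icc 1 (r - 1), sigmaOp i p

/-- `σ^{(i)}` commutes with finite sums. -/
lemma sigmaOp_sum (i : ℕ) {α : Type*} (s : Finset α) (f : α → MvPolynomial ℕ ℚ) :
    sigmaOp i (∑ j ∈ s, f j) = ∑ j ∈ s, sigmaOp i (f j) := by
  simp [sigmaOp, Finset.sum_sub_distrib]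

/-- `σ^{(i)}` commutes with negation. -/
lemma sigmaOp_neg (i : ℕ) (q : MvPolynomial ℕ ℚ) : sigmaOp i (-q) = - sigmaOp i q := by
  simp [sigmaOp]; ring

/-- If `p` is a polynomial in `r ≥ 3` variables with `p|(1+σ^{(1)}) = 0` and
`p|(σ^{(j)}σ^{(i)} + σ^{(i)}σ^{(j-1)}) = 0` for all `r-1 ≥ i ≥ j ≥ 2`, then `p|σ|(1+σ) = 0`. -/
theorem sigma_total_vanish (r : ℕ) (hr : 3 ≤ r) (p : MvPolynomial ℕ ℚ)
    (hvars : ∀ d ∈ p.support, ∀ k ∈ d.support, 1 ≤ k ∧ k ≤ r)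
    (h1 : p + sigmaOp 1 p = 0)
    (h2 : ∀ i j, 2 ≤ j → j ≤ i → i ≤ r - 1 →
      sigmaOp i (sigmaOp j p) + sigmaOp (j - 1) (sigmaOp i p) = 0) :
    sigmaSum r p + sigmaSum r (sigmaSum r p) = 0 := by
  have hneg : sigmaOp 1 p = -p := by linear_combination h1
  set n := r - 1 with hn
  have hn2 : 2 ≤ n := by omega
  -- The part of the double sum with first-applied index ≥ 2 vanishes by an involution
  -- pairing `(j, i)` (with `2 ≤ j ≤ i`) against `(i, j-1)`, using `h2`.
  have key : ∑ a ∈ Icc 2 n, ∑ b ∈ Icc 1 n, sigmaOp b (sigmaOp a p) = 0 := by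
    rw [← Finset.sum_product']
    apply Finset.sum_involution
      (g := fun x _ => if x.1 ≤ x.2 then (x.2, x.1 - 1) else (x.2 + 1, x.1))
    · rintro ⟨a, b⟩ ha
      simp only [Finset.mem_product, Finset.mem_Icc] at ha
      dsimp only
      by_cases hab : a ≤ b <;> [rw [if_pos hab]; rw [if_neg hab]] <;> dsimp only
      · exact h2 b a ha.1.1 hab (by omega)
      · have := h2 a (b + 1) (by omega) (by omega) (by omega)
        simpa [Nat.add_sub_cancel, add_comm] using this
    · rintro ⟨a, b⟩ ha _
      simp only [Finset.mem_product, Finset.mem_Icc] at ha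
      dsimp only
      by_cases hab : a ≤ b <;> [rw [if_pos hab]; rw [if_neg hab]] <;>
        simp only [ne_eq, Prod.mk.injEq, not_and] <;> omega
    · rintro ⟨a, b⟩ ha
      simp only [Finset.mem_product, Finset.mem_Icc] at ha
      split_ifs with hh1 hh2 hh2 <;> simp [Prod.ext_iff] <;> omega
    · rintro ⟨a, b⟩ ha
      simp only [Finset.mem_product, Finset.mem_Icc] at ha
      dsimp only
      split_ifs with h <;> simp only [Finset.mem_product, Finset.mem_Icc] <;>
        exact ⟨⟨by omega, by omega⟩, by omega, by omega⟩
  -- Expand the double application as a double sum.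
  have expand : sigmaSum r (sigmaSum r p)
      = ∑ b ∈ Icc 1 n, ∑ a ∈ Icc 1 n, sigmaOp b (sigmaOp a p) := by
    simp [sigmaSum, sigmaOp_sum, ← hn]
  have hsplit : Icc 1 n = insert 1 (Icc 2 n) := by
    ext x; simp only [Finset.mem_Icc, Finset.mem_insert]; omega
  have inner : ∀ b, ∑ a ∈ Icc 1 n, sigmaOp b (sigmaOp a p)
      = - sigmaOp b p + ∑ a ∈ Icc 2 n, sigmaOp b (sigmaOp a p) := by
    intro b
    rw [hsplit, Finset.sum_insert (by simp), hneg, sigmaOp_neg]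
  calc sigmaSum r p + sigmaSum r (sigmaSum r p)
      = sigmaSum r p + ∑ b ∈ Icc 1 n,
          (- sigmaOp b p + ∑ a ∈ Icc 2 n, sigmaOp b (sigmaOp a p)) := by
        rw [expand]; exact congrArg _ (Finset.sum_congr rfl fun b _ => inner b)
    _ = sigmaSum r p + ((- ∑ b ∈ Icc 1 n, sigmaOp b p)
          + ∑ b ∈ Icc 1 n, ∑ a ∈ Icc 2 n, sigmaOp b (sigmaOp a p)) := by
        rw [Finset.sum_add_distrib, Finset.sum_neg_distrib]
    _ = 0 := by
        rw [Finset.sum_comm, key]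
        show sigmaSum r p + (-(sigmaSum r p) + 0) = 0
        ring
end
end

section
/- For r ≥ 3, the space W_{N,r} decomposes as: every element of W_{N,r} is a ℚ-linear combination of polynomials of the form p(x1,x2) x3^{n3-1} ⋯ xr^{nr-1} where p ∈ W_{n,2} for some 1 < n < N and (n3,...,nr) ∈ S_{N-n,r-2}; consequently dim W_{N,r} = Σ_{1<n<N} dim W_{n,2} * |S_{N-n,r-2}|. -/
open MvPolynomial Finset

attribute [local instance] Classical.propDecidable

noncomputable section

/-- `S_{N,r}`: the set of `r`-tuples of odd integers `≥ 3` summing to `N`. -/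
def Sset (N r : ℕ) : Finset (Fin r → ℕ) :=
  (Fintype.piFinset fun _ => Finset.Icc 3 N).filter fun m =>
    (∑ i, m i) = N ∧ ∀ i, Odd (m i)

/-- Extend an `r`-tuple to a 1-indexed function `ℕ → ℕ` (zero outside `[1, r]`). -/
def extFun (r : ℕ) (m : Fin r → ℕ) : ℕ → ℕ := fun k =>
  if h : 1 ≤ k ∧ k ≤ r then m ⟨k - 1, by omega⟩ else 0

/-- The exponent vector of the monomial `x1^{n1-1} ⋯ xr^{nr-1}` (1-indexed variables). -/
def expvec (r : ℕ) (n : Fin r → ℕ) : ℕ →₀ ℕ :=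
  ∑ i : Fin r, Finsupp.single ((i : ℕ) + 1) (n i - 1)

/-- `σ^{(i)}` as a linear map. -/
def sigmaLin (i : ℕ) : MvPolynomial ℕ ℚ →ₗ[ℚ] MvPolynomial ℕ ℚ :=
  (aeval (sub1 i)).toLinearMap - (aeval (sub2 i)).toLinearMap

/-- The linear projection onto the span of the monomials `x1^{n1-1} ⋯ xr^{nr-1}` with
`(n1,...,nr) ∈ S_{N,r}`. -/
def truncMap (N r : ℕ) : MvPolynomial ℕ ℚ →ₗ[ℚ] MvPolynomial ℕ ℚ :=
  ∑ n ∈ Sset N r, (MvPolynomial.monomial (expvec r n)).comp (MvPolynomial.lcoeff ℚ (expvec r n))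

/-- The space `W_{N,r}` of homogeneous polynomials supported on totally odd monomials
`x1^{n1-1} ⋯ xr^{nr-1}`, `(n1,...,nr) ∈ S_{N,r}`, satisfying
`p(x1,...,xr) = p(x2-x1,x2,x3,...,xr) - p(x2-x1,x1,x3,...,xr)`. -/
def Wspace (N r : ℕ) : Submodule ℚ (MvPolynomial ℕ ℚ) :=
  LinearMap.ker (LinearMap.id + sigmaLin 1) ⊓ LinearMap.ker (LinearMap.id - truncMap N r)

/-!
For `r ≥ 3`, a tuple in `S_{N,r}` splits uniquely as a head `a ∈ S_{n,2}` and a tail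
`t ∈ S_{N-n,r-2}` with `1 < n < N`, the (positive) sum of the tail determining `n`. Accordingly
`x^{expvec m}` factors as `x1^{a1-1} x2^{a2-1}` times the tail monomial `x3^{t1-1} ⋯`, and
collecting the terms of `p ∈ W_{N,r}` by tail monomial writes `p = Σ_{(n,t)} q_{n,t} x^t` with
`q_{n,t}` a polynomial in `x1, x2` supported on `S_{n,2}`. Such a decomposition is unique since the
tail monomials are distinct and involve only `x3, x4, …`. The operator `σ^{(1)}` only substitutes
`x1, x2`, so it commutes with multiplication by `x^t`; comparing the `x^t`-parts of `p + σ p = 0`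
gives `q_{n,t} ∈ W_{n,2}`. Hence `(q_{n,t}) ↦ Σ q_{n,t} x^t` is an isomorphism
`⨁_{(n,t)} W_{n,2} ≅ W_{N,r}`.
-/

namespace MvPolynomial

variable {σ R : Type*} [CommSemiring R]

theorem aeval_mem_supported {τ : Type*} {f : σ → MvPolynomial τ R} {s : Set σ} {t : Set τ}
    (hf : ∀ i ∈ s, f i ∈ supported R t) {q : MvPolynomial σ R} (hq : q ∈ supported R s) :
    aeval f q ∈ supported R t := by
  rw [supported_eq_range_rename, AlgHom.mem_range] at hq
  obtain ⟨q, rfl⟩ := hq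
  have hq : aeval (f ∘ (↑) : s → _) q ∈ (aeval (f ∘ (↑) : s → _)).range :=
    ⟨q, rfl⟩
  rw [aeval_range] at hq
  rw [aeval_rename]
  exact Algebra.adjoin_le (by rintro _ ⟨i, rfl⟩; exact hf i i.2) hq

theorem aeval_monomial_one_of_eqOn {f : σ → MvPolynomial σ R} {v : σ →₀ ℕ}
    (hf : ∀ j ∈ v.support, f j = X j) : aeval f (monomial v (1 : R)) = monomial v 1 := by
  rw [aeval_monomial, map_one, one_mul, monomial_eq, C_1, one_mul]
  exact Finsupp.prod_congr fun j hj => by rw [hf j hj]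

theorem monomial_mem_supported {s : Set σ} {d : σ →₀ ℕ} (hd : ↑d.support ⊆ s) (c : R) :
    monomial d c ∈ supported R s := by
  rcases eq_or_ne c 0 with rfl | hc
  · rw [map_zero]
    exact zero_mem _
  · rw [mem_supported, vars_monomial hc]
    exact hd

theorem coeff_eq_zero_of_mem_supported {s : Set σ} {q : MvPolynomial σ R}
    (hq : q ∈ supported R s) {d : σ →₀ ℕ} (hd : ¬ ↑d.support ⊆ s) :
    coeff d q = 0 := by
  by_contra hne
  exact hd fun j hj => mem_supported.1 hq <|
    (mem_vars_iff_mem_support j).2 ⟨d, mem_support_iff.2 hne, hj⟩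

theorem coeff_add_mul_monomial_of_mem_supported {s : Set σ} {q : MvPolynomial σ R}
    (hq : q ∈ supported R s) {d v w : σ →₀ ℕ} (hd : ↑d.support ⊆ s)
    (hv : ↑v.support ⊆ sᶜ) (hw : ↑w.support ⊆ sᶜ) :
    coeff (d + v) (q * monomial w 1) = if w = v then coeff d q else 0 := by
  split_ifs with hwv
  · rw [hwv, coeff_mul_monomial, mul_one]
  rw [coeff_mul_monomial']
  split_ifs with hle
  · rw [mul_one]
    refine coeff_eq_zero_of_mem_supported hq fun he => hwv ?_
    ext j
    have hlej : w j ≤ d j + v j := hle j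
    have hsub : (d + v - w) j = d j + v j - w j := rfl
    by_cases hj : j ∈ s
    · rw [Finsupp.notMem_support_iff.1 fun h => hv h hj,
        Finsupp.notMem_support_iff.1 fun h => hw h hj]
    · have hdj := Finsupp.notMem_support_iff.1 fun h => hj (hd h)
      have hej := Finsupp.notMem_support_iff.1 fun h => hj (he h)
      omega
  · rfl

section SumMulMonomial

variable {ι : Type*} [Fintype ι] {s : Set σ} {q : ι → MvPolynomial σ R}
  {v : ι → σ →₀ ℕ}

theorem coeff_add_sum_mul_monomial (hq : ∀ i, q i ∈ supported R s)
    (hv : Function.Injective v) (hvs : ∀ i, ↑(v i).support ⊆ sᶜ) {d : σ →₀ ℕ}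
    (hd : ↑d.support ⊆ s) (i : ι) :
    coeff (d + v i) (∑ j, q j * monomial (v j) 1) = coeff d (q i) := by
  rw [coeff_sum, Finset.sum_eq_single i]
  · rw [coeff_add_mul_monomial_of_mem_supported (hq i) hd (hvs i) (hvs i), if_pos rfl]
  · intro j _ hji
    rw [coeff_add_mul_monomial_of_mem_supported (hq j) hd (hvs i) (hvs j), if_neg (hv.ne hji)]
  · simp

theorem eq_zero_of_sum_mul_monomial_eq_zero (hq : ∀ i, q i ∈ supported R s)
    (hv : Function.Injective v) (hvs : ∀ i, ↑(v i).support ⊆ sᶜ)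
    (h : ∑ j, q j * monomial (v j) 1 = 0) (i : ι) : q i = 0 := by
  ext d
  rw [coeff_zero]
  by_cases hd : ↑d.support ⊆ s
  · rw [← coeff_add_sum_mul_monomial hq hv hvs hd i, h, coeff_zero]
  · exact coeff_eq_zero_of_mem_supported (hq i) hd

end SumMulMonomial

end MvPolynomial

/-- `expvec r` is `expvecFrom 1 r` by definition; the tail monomials are those with `c = 3`. -/
def expvecFrom (c r : ℕ) (t : Fin r → ℕ) : ℕ →₀ ℕ :=
  ∑ i : Fin r, Finsupp.single ((i : ℕ) + c) (t i - 1)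

section expvecFrom

variable {c r : ℕ}

theorem expvecFrom_apply_add (t : Fin r → ℕ) (i : Fin r) :
    expvecFrom c r t ((i : ℕ) + c) = t i - 1 := by
  rw [expvecFrom, Finsupp.finsetSum_apply, Finset.sum_eq_single i]
  · exact Finsupp.single_eq_same
  · intro j _ hji
    exact Finsupp.single_eq_of_ne (by omega)
  · simp

theorem support_expvecFrom_subset (t : Fin r → ℕ) :
    ↑(expvecFrom c r t).support ⊆ Set.Ico c (r + c) := by
  intro j hj
  obtain ⟨i, -, hi⟩ := Finset.mem_biUnion.1 (Finsupp.support_finsetSum hj)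
  rw [Finsupp.mem_support_single] at hi
  have := i.2
  exact ⟨by omega, by omega⟩

theorem eq_of_expvecFrom_eq {t t' : Fin r → ℕ} (ht : ∀ i, 1 ≤ t i) (ht' : ∀ i, 1 ≤ t' i)
    (h : expvecFrom c r t = expvecFrom c r t') : t = t' := by
  funext i
  have hi := congr($h ((i : ℕ) + c))
  rw [expvecFrom_apply_add, expvecFrom_apply_add] at hi
  have := ht i
  have := ht' i
  omega

theorem prod_X_pow_eq_monomial (t : Fin r → ℕ) :
    ∏ i : Fin r, (X ((i : ℕ) + c) : MvPolynomial ℕ ℚ) ^ (t i - 1) =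
      monomial (expvecFrom c r t) 1 := by
  rw [expvecFrom, monomial_sum_one]
  exact Finset.prod_congr rfl fun i _ => X_pow_eq_monomial

end expvecFrom

theorem mem_Sset {N r : ℕ} {m : Fin r → ℕ} :
    m ∈ Sset N r ↔ (∀ i, 3 ≤ m i) ∧ ∑ i, m i = N ∧ ∀ i, Odd (m i) := by
  simp only [Sset, Finset.mem_filter, Fintype.mem_piFinset, Finset.mem_Icc]
  constructor
  · rintro ⟨h, hsum, hodd⟩
    exact ⟨fun i => (h i).1, hsum, hodd⟩
  · rintro ⟨h, hsum, hodd⟩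
    exact ⟨fun i => ⟨h i, hsum ▸ Finset.single_le_sum (fun j _ => Nat.zero_le (m j))
      (Finset.mem_univ i)⟩, hsum, hodd⟩

theorem one_le_of_mem_Sset {N r : ℕ} {m : Fin r → ℕ} (hm : m ∈ Sset N r) (i : Fin r) :
    1 ≤ m i :=
  le_trans (by norm_num) ((mem_Sset.1 hm).1 i)

theorem eq_of_expvec_eq_of_mem_Sset {N N' r : ℕ} {m m' : Fin r → ℕ} (hm : m ∈ Sset N r)
    (hm' : m' ∈ Sset N' r) (h : expvec r m = expvec r m') : m = m' :=
  eq_of_expvecFrom_eq (one_le_of_mem_Sset hm) (one_le_of_mem_Sset hm') h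

theorem sum_eq_of_mem_Sset_two {n : ℕ} {a : Fin 2 → ℕ} (ha : a ∈ Sset n 2) :
    a 0 + a 1 = n := by
  simpa only [Fin.sum_univ_two] using (mem_Sset.1 ha).2.1

def joinTuple {k : ℕ} (a : Fin 2 → ℕ) (t : Fin (k + 1) → ℕ) : Fin (k + 3) → ℕ :=
  Fin.cons (a 0) (Fin.cons (a 1) t)

section joinTuple

variable {k : ℕ}

@[simp]
theorem joinTuple_zero (a : Fin 2 → ℕ) (t : Fin (k + 1) → ℕ) : joinTuple a t 0 = a 0 :=
  rfl

@[simp]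
theorem joinTuple_one (a : Fin 2 → ℕ) (t : Fin (k + 1) → ℕ) : joinTuple a t 1 = a 1 := by
  rw [← Fin.succ_zero_eq_one, joinTuple, Fin.cons_succ, Fin.cons_zero]

@[simp]
theorem joinTuple_succ_succ (a : Fin 2 → ℕ) (t : Fin (k + 1) → ℕ) (i : Fin (k + 1)) :
    joinTuple a t i.succ.succ = t i :=
  rfl

theorem joinTuple_head_tail (m : Fin (k + 3) → ℕ) :
    joinTuple ![m 0, m 1] (fun i => m i.succ.succ) = m := by
  funext i
  refine Fin.cases rfl (fun j => Fin.cases ?_ (fun l => rfl) j) i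
  simp [joinTuple, Fin.succ_zero_eq_one]

theorem forall_joinTuple {P : ℕ → Prop} {a : Fin 2 → ℕ} {t : Fin (k + 1) → ℕ} :
    (∀ i, P (joinTuple a t i)) ↔ P (a 0) ∧ P (a 1) ∧ ∀ i, P (t i) := by
  simp only [Fin.forall_fin_succ (n := k + 2), Fin.forall_fin_succ (n := k + 1), joinTuple,
    Fin.cons_zero, Fin.cons_succ]

theorem sum_joinTuple (a : Fin 2 → ℕ) (t : Fin (k + 1) → ℕ) :
    ∑ i, joinTuple a t i = a 0 + a 1 + ∑ i, t i := by
  simp only [Fin.sum_univ_succ (n := k + 2), Fin.sum_univ_succ (n := k + 1), joinTuple,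
    Fin.cons_zero, Fin.cons_succ, add_assoc]

theorem expvec_joinTuple (a : Fin 2 → ℕ) (t : Fin (k + 1) → ℕ) :
    expvec (k + 3) (joinTuple a t) = expvec 2 a + expvecFrom 3 (k + 1) t := by
  simp only [expvec, expvecFrom, Fin.sum_univ_succ (n := k + 2), Fin.sum_univ_succ (n := k + 1),
    Fin.sum_univ_two, joinTuple, Fin.cons_zero, Fin.cons_succ, Fin.val_zero, Fin.val_succ,
    Fin.val_one, add_assoc]
  norm_num

theorem joinTuple_mem_Sset_iff {N : ℕ} {a : Fin 2 → ℕ} {t : Fin (k + 1) → ℕ} :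
    joinTuple a t ∈ Sset N (k + 3) ↔
      a 0 + a 1 < N ∧ a ∈ Sset (a 0 + a 1) 2 ∧ t ∈ Sset (N - (a 0 + a 1)) (k + 1) := by
  simp only [mem_Sset, forall_joinTuple, sum_joinTuple, Fin.forall_fin_two, Fin.sum_univ_two]
  constructor
  · rintro ⟨⟨ha0, ha1, ht⟩, hsum, hodd0, hodd1, hodd⟩
    -- the tail is nonempty, so it has positive sum and the head sum is `< N`
    have := ht 0
    have := Finset.single_le_sum (fun j _ => Nat.zero_le (t j)) (Finset.mem_univ 0)
    exact ⟨by omega, ⟨⟨ha0, ha1⟩, trivial, hodd0, hodd1⟩, ht, by omega, hodd⟩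
  · rintro ⟨hlt, ⟨⟨ha0, ha1⟩, -, hodd0, hodd1⟩, ht, hsum, hodd⟩
    exact ⟨⟨ha0, ha1, ht⟩, by omega, hodd0, hodd1, hodd⟩

end joinTuple

theorem truncMap_apply (N r : ℕ) (p : MvPolynomial ℕ ℚ) :
    truncMap N r p = ∑ m ∈ Sset N r, monomial (expvec r m) (coeff (expvec r m) p) := by
  simp [truncMap, LinearMap.sum_apply, lcoeff]

theorem truncMap_monomial {N r : ℕ} {m : Fin r → ℕ} (hm : m ∈ Sset N r) (c : ℚ) :
    truncMap N r (monomial (expvec r m) c) = monomial (expvec r m) c := by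
  rw [truncMap_apply, Finset.sum_eq_single_of_mem m hm, coeff_monomial, if_pos rfl]
  intro m' hm' hne
  rw [coeff_monomial, if_neg fun h => hne (eq_of_expvec_eq_of_mem_Sset hm hm' h).symm, map_zero]

theorem mem_Wspace {N r : ℕ} {p : MvPolynomial ℕ ℚ} :
    p ∈ Wspace N r ↔ p + sigmaLin 1 p = 0 ∧ truncMap N r p = p := by
  simp only [Wspace, Submodule.mem_inf, LinearMap.mem_ker, LinearMap.add_apply,
    LinearMap.sub_apply, LinearMap.id_apply, sub_eq_zero, eq_comm (a := p)]

instance (N r : ℕ) : FiniteDimensional ℚ (Wspace N r) := by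
  let S := Submodule.span ℚ (Set.range fun m : Sset N r => monomial (expvec r m) (1 : ℚ))
  have : FiniteDimensional ℚ S := FiniteDimensional.span_of_finite ℚ (Set.finite_range _)
  refine Submodule.finiteDimensional_of_le (S₂ := S) fun p hp => ?_
  rw [← (mem_Wspace.1 hp).2, truncMap_apply]
  refine Submodule.sum_mem _ fun m hm => ?_
  rw [← mul_one (coeff _ p), ← smul_eq_mul, ← smul_monomial]
  exact Submodule.smul_mem _ _ (Submodule.subset_span ⟨⟨m, hm⟩, rfl⟩)

theorem sum_monomial_expvec_two_mem_supported (s : Finset (Fin 2 → ℕ))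
    (c : (Fin 2 → ℕ) → ℚ) :
    ∑ a ∈ s, monomial (expvec 2 a) (c a) ∈ supported ℚ (Set.Iio 3) :=
  Subalgebra.sum_mem _ fun a _ => monomial_mem_supported
    ((support_expvecFrom_subset (c := 1) a).trans Set.Ico_subset_Iio_self) _

theorem mem_supported_of_mem_Wspace_two {n : ℕ} {q : MvPolynomial ℕ ℚ}
    (hq : q ∈ Wspace n 2) :
    q ∈ supported ℚ (Set.Iio 3) := by
  rw [← (mem_Wspace.1 hq).2, truncMap_apply]
  exact sum_monomial_expvec_two_mem_supported _ _

theorem sigmaLin_one_apply (p : MvPolynomial ℕ ℚ) :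
    sigmaLin 1 p = aeval (sub1 1) p - aeval (sub2 1) p :=
  rfl

theorem sigmaLin_one_mem_supported {q : MvPolynomial ℕ ℚ}
    (hq : q ∈ supported ℚ (Set.Iio 3)) :
    sigmaLin 1 q ∈ supported ℚ (Set.Iio 3) := by
  have hsub : ∀ f ∈ [sub1 1, sub2 1], ∀ j ∈ Set.Iio 3,
      f j ∈ supported ℚ (Set.Iio 3) := by
    intro f hf j hj
    have hX : ∀ i < 3, (X i : MvPolynomial ℕ ℚ) ∈ supported ℚ (Set.Iio 3) :=
      fun i hi => X_mem_supported.2 hi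
    simp only [List.mem_cons, List.not_mem_nil, or_false] at hf
    rw [Set.mem_Iio] at hj
    interval_cases j <;> rcases hf with rfl | rfl <;>
      simp [sub1, sub2, hX, Subalgebra.sub_mem]
  exact Subalgebra.sub_mem _ (aeval_mem_supported (hsub _ (by simp)) hq)
    (aeval_mem_supported (hsub _ (by simp)) hq)

theorem sigmaLin_one_mul_monomial (q : MvPolynomial ℕ ℚ) {v : ℕ →₀ ℕ}
    (hv : ↑v.support ⊆ (Set.Iio 3)ᶜ) :
    sigmaLin 1 (q * monomial v 1) = sigmaLin 1 q * monomial v 1 := by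
  have hfix : ∀ f ∈ [sub1 1, sub2 1], ∀ j ∈ v.support, f j = X j := by
    intro f hf j hj
    have hj : 3 ≤ j := not_lt.1 (hv hj)
    simp only [List.mem_cons, List.not_mem_nil, or_false] at hf
    rcases hf with rfl | rfl <;> simp only [sub1, sub2] <;>
      rw [if_neg (by omega), if_neg (by omega)]
  rw [sigmaLin_one_apply, sigmaLin_one_apply, map_mul, map_mul,
    aeval_monomial_one_of_eqOn (hfix _ (by simp)), aeval_monomial_one_of_eqOn (hfix _ (by simp)),
    sub_mul]

theorem support_expvecFrom_three_subset {r : ℕ} (t : Fin r → ℕ) :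
    ↑(expvecFrom 3 r t).support ⊆ (Set.Iio 3)ᶜ :=
  (support_expvecFrom_subset t).trans fun _ hj => not_lt.2 hj.1

def tailIndex (N k : ℕ) : Finset (Σ _ : ℕ, Fin (k + 1) → ℕ) :=
  (Finset.Ioo 1 N).sigma fun n => Sset (N - n) (k + 1)

theorem expvecFrom_injective_tailIndex (N k : ℕ) :
    Function.Injective fun x : tailIndex N k => expvecFrom 3 (k + 1) x.1.2 := by
  rintro ⟨⟨n, t⟩, hx⟩ ⟨⟨n', t'⟩, hx'⟩ h
  simp only [tailIndex, Finset.mem_sigma, Finset.mem_Ioo] at hx hx'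
  obtain rfl : t = t' :=
    eq_of_expvecFrom_eq (one_le_of_mem_Sset hx.2) (one_le_of_mem_Sset hx'.2) h
  have hsum := (mem_Sset.1 hx.2).2.1
  have hsum' := (mem_Sset.1 hx'.2).2.1
  obtain rfl : n = n' := by omega
  rfl

def headCoeff (n : ℕ) (v : ℕ →₀ ℕ) (p : MvPolynomial ℕ ℚ) : MvPolynomial ℕ ℚ :=
  ∑ a ∈ Sset n 2, monomial (expvec 2 a) (coeff (expvec 2 a + v) p)

theorem sum_headCoeff_mul_monomial {N k : ℕ} {p : MvPolynomial ℕ ℚ}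
    (hp : truncMap N (k + 3) p = p) :
    ∑ x : tailIndex N k, headCoeff x.1.1 (expvecFrom 3 (k + 1) x.1.2) p *
      monomial (expvecFrom 3 (k + 1) x.1.2) 1 = p := by
  rw [Finset.sum_coe_sort (tailIndex N k) fun x =>
    headCoeff x.1 (expvecFrom 3 (k + 1) x.2) p * monomial (expvecFrom 3 (k + 1) x.2) 1]
  simp only [headCoeff, Finset.sum_mul, monomial_mul, mul_one]
  rw [Finset.sum_sigma']
  conv_rhs => rw [← hp, truncMap_apply]
  symm
  refine Finset.sum_nbij' (fun m => ⟨⟨m 0 + m 1, fun i => m i.succ.succ⟩, ![m 0, m 1]⟩)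
    (fun y => joinTuple y.2 y.1.2) (fun m hm => ?_) (fun y hy => ?_)
    (fun m _ => joinTuple_head_tail m) (fun y hy => ?_) (fun m _ => ?_)
  · rw [← joinTuple_head_tail m, joinTuple_mem_Sset_iff] at hm
    simp only [Matrix.cons_val_zero, Matrix.cons_val_one] at hm
    have h0 := (mem_Sset.1 hm.2.1).1 0
    simp only [Finset.mem_sigma, tailIndex, Finset.mem_Ioo, Matrix.cons_val_zero] at h0 ⊢
    exact ⟨⟨⟨by omega, hm.1⟩, hm.2.2⟩, hm.2.1⟩
  · obtain ⟨⟨n, t⟩, a⟩ := y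
    simp only [Finset.mem_sigma, tailIndex, Finset.mem_Ioo] at hy
    obtain ⟨⟨⟨-, hn⟩, ht⟩, ha⟩ := hy
    rw [← sum_eq_of_mem_Sset_two ha] at hn ht ha
    exact joinTuple_mem_Sset_iff.2 ⟨hn, ha, ht⟩
  · obtain ⟨⟨n, t⟩, a⟩ := y
    simp only [Finset.mem_sigma] at hy
    have ha : ![a 0, a 1] = a := by
      ext i
      fin_cases i <;> rfl
    simp only [joinTuple_zero, joinTuple_one, joinTuple_succ_succ, sum_eq_of_mem_Sset_two hy.2,
      ha]
  · conv_lhs => rw [← joinTuple_head_tail m]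
    rw [expvec_joinTuple]

theorem headCoeff_mem_Wspace {N k : ℕ} {p : MvPolynomial ℕ ℚ} (hp : p ∈ Wspace N (k + 3))
    (x : tailIndex N k) : headCoeff x.1.1 (expvecFrom 3 (k + 1) x.1.2) p ∈ Wspace x.1.1 2 := by
  set q := fun x : tailIndex N k => headCoeff x.1.1 (expvecFrom 3 (k + 1) x.1.2) p
  set t := fun x : tailIndex N k => monomial (expvecFrom 3 (k + 1) x.1.2) (1 : ℚ)
  have hq : ∀ x, q x ∈ supported ℚ (Set.Iio 3) := fun x =>
    sum_monomial_expvec_two_mem_supported _ _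
  refine mem_Wspace.2 ⟨?_, ?_⟩
  · -- `p + σ p = 0` holds slice by slice, since `σ` acts on `x1, x2` only
    refine eq_zero_of_sum_mul_monomial_eq_zero (fun x => Subalgebra.add_mem _ (hq x)
      (sigmaLin_one_mem_supported (hq x))) (expvecFrom_injective_tailIndex N k)
      (fun x => support_expvecFrom_three_subset _) ?_ x
    calc ∑ x, (q x + sigmaLin 1 (q x)) * t x
        = ∑ x, q x * t x + sigmaLin 1 (∑ x, q x * t x) := by
          simp only [add_mul, map_sum, Finset.sum_add_distrib, t,
            sigmaLin_one_mul_monomial _ (support_expvecFrom_three_subset _)]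
      _ = 0 := by rw [sum_headCoeff_mul_monomial (mem_Wspace.1 hp).2, (mem_Wspace.1 hp).1]
  · rw [headCoeff, map_sum]
    exact Finset.sum_congr rfl fun a ha => truncMap_monomial ha _

theorem mul_monomial_mem_Wspace {N n k : ℕ} {q : MvPolynomial ℕ ℚ} (hq : q ∈ Wspace n 2)
    {t : Fin (k + 1) → ℕ} (hn : n < N) (ht : t ∈ Sset (N - n) (k + 1)) :
    q * monomial (expvecFrom 3 (k + 1) t) 1 ∈ Wspace N (k + 3) := by
  obtain ⟨hσ, htrunc⟩ := mem_Wspace.1 hq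
  refine mem_Wspace.2 ⟨?_, ?_⟩
  · rw [sigmaLin_one_mul_monomial _ (support_expvecFrom_three_subset t), ← add_mul, hσ,
      zero_mul]
  · rw [truncMap_apply] at htrunc
    rw [← htrunc, Finset.sum_mul, map_sum]
    refine Finset.sum_congr rfl fun a ha => ?_
    have hsum := sum_eq_of_mem_Sset_two ha
    rw [monomial_mul, mul_one, ← expvec_joinTuple]
    exact truncMap_monomial (joinTuple_mem_Sset_iff.2 ⟨hsum ▸ hn, hsum ▸ ha, hsum ▸ ht⟩) _

def tailSum (N k : ℕ) :
    (∀ x : tailIndex N k, Wspace x.1.1 2) →ₗ[ℚ] MvPolynomial ℕ ℚ where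
  toFun q := ∑ x, (q x : MvPolynomial ℕ ℚ) * monomial (expvecFrom 3 (k + 1) x.1.2) 1
  map_add' q q' := by
    simp only [Pi.add_apply, Submodule.coe_add, add_mul, Finset.sum_add_distrib]
  map_smul' c q := by simp only [Pi.smul_apply, Submodule.coe_smul, smul_mul_assoc,
    Finset.smul_sum, RingHom.id_apply]

section tailSum

variable {N k : ℕ}

theorem tailSum_apply (q : ∀ x : tailIndex N k, Wspace x.1.1 2) :
    tailSum N k q = ∑ x, (q x : MvPolynomial ℕ ℚ) * monomial (expvecFrom 3 (k + 1) x.1.2) 1 :=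
  rfl

theorem tailSum_mem_Wspace (q : ∀ x : tailIndex N k, Wspace x.1.1 2) :
    tailSum N k q ∈ Wspace N (k + 3) := by
  rw [tailSum_apply]
  refine Submodule.sum_mem _ fun x _ => ?_
  obtain ⟨hn, ht⟩ := Finset.mem_sigma.1 x.2
  exact mul_monomial_mem_Wspace (q x).2 (Finset.mem_Ioo.1 hn).2 ht

theorem tailSum_injective : Function.Injective (tailSum N k) := by
  refine (injective_iff_map_eq_zero _).2 fun q hq => _root_.funext fun x => Subtype.ext ?_
  rw [tailSum_apply] at hq
  exact eq_zero_of_sum_mul_monomial_eq_zero (fun x => mem_supported_of_mem_Wspace_two (q x).2)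
    (expvecFrom_injective_tailIndex N k) (fun x => support_expvecFrom_three_subset _) hq x

theorem exists_tailSum_eq {p : MvPolynomial ℕ ℚ} (hp : p ∈ Wspace N (k + 3)) :
    ∃ q, tailSum N k q = p :=
  ⟨fun x => ⟨_, headCoeff_mem_Wspace hp x⟩, by
    rw [tailSum_apply]
    exact sum_headCoeff_mul_monomial (mem_Wspace.1 hp).2⟩

def tailSumEquiv (N k : ℕ) :
    (∀ x : tailIndex N k, Wspace x.1.1 2) ≃ₗ[ℚ] Wspace N (k + 3) :=
  LinearEquiv.ofBijective ((tailSum N k).codRestrict _ tailSum_mem_Wspace)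
    ⟨fun _ _ h => tailSum_injective congr(($h : MvPolynomial ℕ ℚ)), fun p =>
      (exists_tailSum_eq p.2).imp fun _ hq => Subtype.ext hq⟩

end tailSum

theorem Wspace_le_span (N k : ℕ) :
    Wspace N (k + 3) ≤ Submodule.span ℚ
      {f : MvPolynomial ℕ ℚ | ∃ n, 1 < n ∧ n < N ∧ ∃ q ∈ Wspace n 2,
        ∃ t ∈ Sset (N - n) (k + 1),
          f = q * ∏ i : Fin (k + 1), (X ((i : ℕ) + 3)) ^ (t i - 1)} := by
  intro p hp
  obtain ⟨q, rfl⟩ := exists_tailSum_eq hp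
  rw [tailSum_apply]
  refine Submodule.sum_mem _ fun x _ => Submodule.subset_span ?_
  obtain ⟨hn, ht⟩ := Finset.mem_sigma.1 x.2
  rw [Finset.mem_Ioo] at hn
  exact ⟨x.1.1, hn.1, hn.2, q x, (q x).2, x.1.2, ht, by rw [prod_X_pow_eq_monomial]⟩

theorem finrank_Wspace (N k : ℕ) :
    Module.finrank ℚ (Wspace N (k + 3)) =
      ∑ n ∈ Finset.Ioo 1 N, Module.finrank ℚ (Wspace n 2) * (Sset (N - n) (k + 1)).card := by
  rw [← (tailSumEquiv N k).finrank_eq, Module.finrank_pi_fintype,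
    Finset.sum_coe_sort (tailIndex N k) fun x => Module.finrank ℚ (Wspace x.1 2), tailIndex,
    Finset.sum_sigma]
  refine Finset.sum_congr rfl fun n _ => ?_
  change ∑ _t ∈ Sset (N - n) (k + 1), Module.finrank ℚ (Wspace n 2) = _
  rw [Finset.sum_const, smul_eq_mul, mul_comm]

/-- For `r ≥ 3`, every element of `W_{N,r}` is a `ℚ`-linear combination of polynomials
`p(x1,x2) x3^{n3-1} ⋯ xr^{nr-1}` with `p ∈ W_{n,2}`, `1 < n < N`, `(n3,...,nr) ∈ S_{N-n,r-2}`;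
consequently `dim W_{N,r} = Σ_{1<n<N} dim W_{n,2} · |S_{N-n,r-2}|`. -/
theorem Wspace_decomposition (N r : ℕ) (hr : 3 ≤ r) :
    Wspace N r ≤ Submodule.span ℚ
        {f : MvPolynomial ℕ ℚ | ∃ n, 1 < n ∧ n < N ∧ ∃ q ∈ Wspace n 2,
          ∃ t ∈ Sset (N - n) (r - 2), f = q * ∏ i : Fin (r - 2), (X ((i : ℕ) + 3)) ^ (t i - 1)} ∧
      Module.finrank ℚ (Wspace N r) =
        ∑ n ∈ Finset.Ioo 1 N, Module.finrank ℚ (Wspace n 2) * (Sset (N - n) (r - 2)).card := by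
  obtain ⟨k, rfl⟩ : ∃ k, r = k + 3 := ⟨r - 3, by omega⟩
  exact ⟨Wspace_le_span N k, finrank_Wspace N k⟩
end
end

section
/- Let (B1, B2) be subspaces of F_{N1,2} and F_{N2,2} respectively in the shuffle algebra F = ℚ⟨z3,z5,...⟩, with B1 ∩ B2 = {0}. Then dim_ℚ ⟨ w1 ⧢ w2 : w1 ∈ B1, w2 ∈ B2 ⟩ = dim_ℚ B1 · dim_ℚ B2. -/
noncomputable section

/-- The shuffle product of two words, as an element of the free `ℚ`-vector space on words. -/
def wordShuffle : List ℕ → List ℕ → (List ℕ →₀ ℚ)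
  | [], w => Finsupp.single w 1
  | a :: u, [] => Finsupp.single (a :: u) 1
  | a :: u, b :: v =>
      Finsupp.mapDomain (fun w => a :: w) (wordShuffle u (b :: v)) +
        Finsupp.mapDomain (fun w => b :: w) (wordShuffle (a :: u) v)
  termination_by u v => u.length + v.length

/-- The shuffle product `⧢` on the shuffle algebra `F = ℚ⟨z3, z5, z7, ...⟩`, whose underlying
vector space is the free `ℚ`-vector space on words (a word `[n1,...,nr]` is `z_{n1}⋯z_{nr}`). -/
def shuffleF (f g : List ℕ →₀ ℚ) : List ℕ →₀ ℚ :=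
  f.sum fun u c => g.sum fun v d => (c * d) • wordShuffle u v

/-- The weight `N`, depth `r` graded piece `F_{N,r}` of `F = ℚ⟨z3, z5, ...⟩`: the span of the
words of length `r` in letters `z_n`, `n` odd `≥ 3`, with total weight `N`. -/
def Fcomp (N r : ℕ) : Submodule ℚ (List ℕ →₀ ℚ) :=
  Submodule.span ℚ {f | ∃ w : List ℕ, f = Finsupp.single w 1 ∧
    w.length = r ∧ w.sum = N ∧ ∀ n ∈ w, Odd n ∧ 3 ≤ n}

/-!
Write an element of the span of the products as `∑ c i j • (b₁ i ⧢ b₂ j)` over bases of `B₁` and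
`B₂`, and let `H a b c d` be the coefficient of `z_a z_b ⊗ z_c z_d` in `∑ c i j • b₁ i ⊗ b₂ j`.
The coefficient of `z_p z_q z_r z_s` in the product is the sum of `H` over the six ways of splitting
the four positions into two ordered pairs. Since `H a b c d` vanishes unless `a + b = N₁` and
`c + d = N₂`, the relations at the four reorderings of `(a, b, c, d)` within `{a, b} × {c, d}` form
a linear system of the shape `α • g + (w ⬝ g) • 1 = 0` with `α > 0` and `w ≥ 0`, which forces
`H a b c d + H c d a b = 0`. An antisymmetric tensor of `B₁ ⊗ B₂` vanishes when `B₁ ⊓ B₂ = ⊥`,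
so the products of basis vectors are linearly independent.
-/

open Module Submodule

section LinearAlgebra

lemma Module.Basis.span_range_coe {R M ι : Type*} [Semiring R] [AddCommMonoid M] [Module R M]
    {P : Submodule R M} (b : Basis ι R P) : span R (Set.range fun i => (b i : M)) = P := by
  have := congrArg (map P.subtype) b.span_eq
  rwa [map_span, Submodule.map_top, range_subtype, ← Set.range_comp] at this

lemma finrank_span_bilinear_eq_mul {K V₁ V₂ W : Type*} [Field K] [AddCommGroup V₁] [Module K V₁]
    [AddCommGroup V₂] [Module K V₂] [AddCommGroup W] [Module K W] (μ : V₁ →ₗ[K] V₂ →ₗ[K] W)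
    {B₁ : Submodule K V₁} {B₂ : Submodule K V₂} {ι₁ ι₂ : Type*} [Fintype ι₁] [Fintype ι₂]
    (b₁ : Basis ι₁ K B₁) (b₂ : Basis ι₂ K B₂)
    (h : LinearIndependent K fun t : ι₁ × ι₂ => μ (b₁ t.1) (b₂ t.2)) :
    finrank K (span K {f | ∃ w₁ ∈ B₁, ∃ w₂ ∈ B₂, f = μ w₁ w₂}) = finrank K B₁ * finrank K B₂ := by
  have hspan : span K {f | ∃ w₁ ∈ B₁, ∃ w₂ ∈ B₂, f = μ w₁ w₂} =
      span K (Set.range fun t : ι₁ × ι₂ => μ (b₁ t.1) (b₂ t.2)) := by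
    calc span K {f | ∃ w₁ ∈ B₁, ∃ w₂ ∈ B₂, f = μ w₁ w₂}
        _ = map₂ μ B₁ B₂ := by
          rw [map₂_eq_span_image2]
          congr 1
          ext f
          simp [Set.mem_image2, eq_comm]
        _ = map₂ μ (span K (Set.range fun i => (b₁ i : V₁)))
              (span K (Set.range fun j => (b₂ j : V₂))) := by
          rw [b₁.span_range_coe, b₂.span_range_coe]
        _ = _ := by rw [map₂_span_span, Set.image2_range]
  rw [hspan, finrank_span_eq_card h, Fintype.card_prod, finrank_eq_card_basis b₁,
    finrank_eq_card_basis b₂]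

/-- Contracting the antisymmetric tensor `∑ c t • u t.1 ⊗ v t.2` in its second factor gives a
vector of `B₁` equal to minus a vector of `B₂`. -/
lemma eq_zero_of_sum_add_swap_eq_zero {K α ι₁ ι₂ : Type*} [Field K] [Fintype ι₁] [Fintype ι₂]
    {B₁ B₂ : Submodule K (α →₀ K)} (hB : B₁ ⊓ B₂ = ⊥) {u : ι₁ → α →₀ K} {v : ι₂ → α →₀ K}
    (hu : LinearIndependent K u) (hv : LinearIndependent K v) (huB : ∀ i, u i ∈ B₁)
    (hvB : ∀ j, v j ∈ B₂) {c : ι₁ × ι₂ → K}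
    (hc : ∀ x y, ∑ t, c t * (u t.1 x * v t.2 y + u t.1 y * v t.2 x) = 0) : c = 0 := by
  have hrow : ∀ y i, ∑ j, c (i, j) * v j y = 0 := by
    intro y
    set f := ∑ i, (∑ j, c (i, j) * v j y) • u i
    set g := ∑ j, (∑ i, c (i, j) * u i y) • v j
    have hfg : f + g = 0 := by
      ext x
      simp only [f, g, Finsupp.add_apply, Finsupp.coe_finsetSum, Finset.sum_apply,
        Finsupp.smul_apply, smul_eq_mul, Finset.sum_mul, Finsupp.coe_zero, Pi.zero_apply]
      rw [Finset.sum_comm (γ := ι₂), ← Finset.sum_add_distrib, ← hc x y, Fintype.sum_prod_type]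
      refine Finset.sum_congr rfl fun i _ => ?_
      rw [← Finset.sum_add_distrib]
      exact Finset.sum_congr rfl fun j _ => by ring
    have hf : f ∈ B₁ ⊓ B₂ :=
      ⟨sum_mem fun i _ => smul_mem _ _ (huB i),
        eq_neg_of_add_eq_zero_left hfg ▸ neg_mem (sum_mem fun j _ => smul_mem _ _ (hvB j))⟩
    rw [hB, mem_bot] at hf
    exact Fintype.linearIndependent_iff.mp hu _ hf
  ext ⟨i, j⟩
  have hcol : ∑ j, c (i, j) • v j = 0 := by
    ext y
    simpa [Finsupp.coe_finsetSum, Finset.sum_apply] using hrow y i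
  exact Fintype.linearIndependent_iff.mp hv _ hcol j

lemma eq_zero_of_forall_smul_add_sum_eq_zero {K ι : Type*} [Field K] [LinearOrder K]
    [IsStrictOrderedRing K] [Fintype ι] {α : K} (hα : 0 < α) {w : ι → K} (hw : 0 ≤ w) {g : ι → K}
    (h : ∀ i, α * g i + ∑ j, w j * g j = 0) : g = 0 := by
  set S := ∑ j, w j * g j
  have hg : ∀ i, g i = -S / α := fun i => by field_simp; linarith [h i]
  have hS : S * (α + ∑ j, w j) = 0 := by
    have : S = ∑ j, w j * (-S / α) := Finset.sum_congr rfl fun j _ => by rw [hg j]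
    rw [← Finset.sum_mul] at this
    field_simp at this
    linarith
  have hpos : 0 < α + ∑ j, w j := add_pos_of_pos_of_nonneg hα (Finset.sum_nonneg fun j _ => hw j)
  have hS0 : S = 0 := (mul_eq_zero.mp hS).resolve_right hpos.ne'
  funext i
  simp [hg i, hS0]

end LinearAlgebra

section DepthFour

/-- The coefficient of `z_p z_q z_r z_s` in `∑ H a b c d • (z_a z_b ⧢ z_c z_d)`: one term for
each way of splitting the four positions into two ordered pairs. -/
def pairSum (H : ℕ → ℕ → ℕ → ℕ → ℚ) (p q r s : ℕ) : ℚ :=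
  H p q r s + H p r q s + H p s q r + H q r p s + H q s p r + H r s p q

variable {N₁ N₂ : ℕ} {H : ℕ → ℕ → ℕ → ℕ → ℚ}

lemma pairSum_eq_of_support (hsupp : ∀ x y z w, ¬(x + y = N₁ ∧ z + w = N₂) → H x y z w = 0)
    {a b c d : ℕ} (hab : a + b = N₁) (hcd : c + d = N₂) :
    pairSum H a b c d = H a b c d +
      ((if c = b then H a b c d else 0) + (if d = b then H a b d c else 0) +
        (if c = a then H b a c d else 0) + (if d = a then H b a d c else 0)) + H c d a b := by
  have hzero : ∀ x y z w, x + y ≠ N₁ → H x y z w = 0 := fun x y z w h =>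
    hsupp x y z w fun h' => h h'.1
  rw [pairSum]
  split_ifs <;> subst_vars <;> simp -failIfUnchanged (disch := omega) only [hzero, add_zero] <;>
    ring

/-- The relations `pairSum H = 0` at the four reorderings `(a,b,c,d), (a,b,d,c), (b,a,c,d),
(b,a,d,c)` share their middle terms, which forces the four values of `H` to vanish. -/
lemma eq_zero_of_pairSum_eq_zero
    (hsupp : ∀ x y z w, ¬(x + y = N₁ ∧ z + w = N₂) → H x y z w = 0)
    (hE : ∀ p q r s, pairSum H p q r s = 0) {β : ℚ} (hβ : 0 ≤ β)
    (hswap : ∀ a b c d, a + b = N₁ → c + d = N₂ → H c d a b = β * H a b c d)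
    (a b c d : ℕ) : H a b c d = 0 := by
  by_cases hsum : a + b = N₁ ∧ c + d = N₂
  swap
  · exact hsupp a b c d hsum
  obtain ⟨hab, hcd⟩ := hsum
  have hba : b + a = N₁ := by omega
  have hdc : d + c = N₂ := by omega
  have e₁ := pairSum_eq_of_support hsupp hab hcd
  have e₂ := pairSum_eq_of_support hsupp hab hdc
  have e₃ := pairSum_eq_of_support hsupp hba hcd
  have e₄ := pairSum_eq_of_support hsupp hba hdc
  rw [hE, hswap _ _ _ _ hab hcd] at e₁
  rw [hE, hswap _ _ _ _ hab hdc] at e₂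
  rw [hE, hswap _ _ _ _ hba hcd] at e₃
  rw [hE, hswap _ _ _ _ hba hdc] at e₄
  have horbit := eq_zero_of_forall_smul_add_sum_eq_zero (α := 1 + β) (by linarith)
    (w := ![if c = b then 1 else 0, if d = b then 1 else 0, if c = a then 1 else 0,
      if d = a then 1 else 0])
    (fun i => by fin_cases i <;> simp only [Pi.zero_apply] <;> split_ifs <;> norm_num)
    (g := ![H a b c d, H a b d c, H b a c d, H b a d c])
    (fun i => by fin_cases i <;> simp [Fin.sum_univ_four, ite_mul] <;> linarith)
  exact congrFun horbit 0

/-- If `N₁ = N₂` apply the previous lemma to the symmetrisation of `H` (with `β = 1`),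
otherwise to `H` itself (with `β = 0`). -/
lemma add_swap_eq_zero_of_pairSum_eq_zero
    (hsupp : ∀ x y z w, ¬(x + y = N₁ ∧ z + w = N₂) → H x y z w = 0)
    (hE : ∀ p q r s, pairSum H p q r s = 0) (a b c d : ℕ) : H a b c d + H c d a b = 0 := by
  rcases eq_or_ne N₁ N₂ with rfl | hN
  · set G : ℕ → ℕ → ℕ → ℕ → ℚ := fun x y z w => H x y z w + H z w x y
    have hGsupp : ∀ x y z w, ¬(x + y = N₁ ∧ z + w = N₁) → G x y z w = 0 := fun x y z w h => by
      simp only [G, hsupp x y z w h, hsupp z w x y (by tauto), add_zero]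
    have hGE : ∀ p q r s, pairSum G p q r s = 0 := fun p q r s => by
      have : pairSum G p q r s = 2 * pairSum H p q r s := by simp only [G, pairSum]; ring
      rw [this, hE, mul_zero]
    exact eq_zero_of_pairSum_eq_zero hGsupp hGE zero_le_one
      (fun a b c d _ _ => by simp only [G]; ring) a b c d
  · have hzero := eq_zero_of_pairSum_eq_zero hsupp hE le_rfl (β := 0)
      fun a b c d _ hcd => by rw [zero_mul]; exact hsupp c d a b (by omega)
    rw [hzero, hzero, add_zero]

end DepthFour

section Shuffle

def shuffleL : (List ℕ →₀ ℚ) →ₗ[ℚ] (List ℕ →₀ ℚ) →ₗ[ℚ] (List ℕ →₀ ℚ) :=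
  Finsupp.lsum ℚ fun u => LinearMap.toSpanSingleton ℚ _
    (Finsupp.lsum ℚ fun v => LinearMap.toSpanSingleton ℚ (List ℕ →₀ ℚ) (wordShuffle u v))

lemma shuffleF_eq_shuffleL (f g : List ℕ →₀ ℚ) : shuffleF f g = shuffleL f g := by
  simp [shuffleF, shuffleL, Finsupp.lsum_apply, Finsupp.sum, Finset.smul_sum, mul_smul]

lemma shuffleL_single_single (u v : List ℕ) :
    shuffleL (Finsupp.single u 1) (Finsupp.single v 1) = wordShuffle u v := by
  simp [shuffleL]

lemma wordShuffle_pair_pair (a b c d : ℕ) :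
    wordShuffle [a, b] [c, d] = Finsupp.single [a, b, c, d] 1 + Finsupp.single [a, c, b, d] 1 +
      Finsupp.single [a, c, d, b] 1 + Finsupp.single [c, a, b, d] 1 +
      Finsupp.single [c, a, d, b] 1 + Finsupp.single [c, d, a, b] 1 := by
  simp only [wordShuffle, Finsupp.mapDomain_add, Finsupp.mapDomain_single]
  abel

lemma shuffleL_single_pair_apply (a b c d p q r s : ℕ) :
    shuffleL (Finsupp.single [a, b] 1) (Finsupp.single [c, d] 1) [p, q, r, s] =
      pairSum (fun x y z w => Finsupp.single [a, b] (1 : ℚ) [x, y] * Finsupp.single [c, d] 1 [z, w])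
        p q r s := by
  simp only [shuffleL_single_single, wordShuffle_pair_pair, pairSum, Finsupp.add_apply,
    Finsupp.single_apply, List.cons.injEq, and_true, ite_zero_mul_ite_zero, mul_one]
  simp only [and_assoc, and_comm, and_left_comm]

lemma shuffleL_apply_of_mem_supported {f g : List ℕ →₀ ℚ}
    (hf : f ∈ Finsupp.supported ℚ ℚ {w | w.length = 2})
    (hg : g ∈ Finsupp.supported ℚ ℚ {w | w.length = 2}) (p q r s : ℕ) :
    shuffleL f g [p, q, r, s] = pairSum (fun x y z w => f [x, y] * g [z, w]) p q r s := by
  rw [Finsupp.supported_eq_span_single] at hf hg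
  induction hf using Submodule.span_induction with
  | mem f hf =>
    obtain ⟨u, hu, rfl⟩ := hf
    obtain ⟨a, b, rfl⟩ := List.length_eq_two.mp hu
    induction hg using Submodule.span_induction with
    | mem g hg =>
      obtain ⟨v, hv, rfl⟩ := hg
      obtain ⟨c, d, rfl⟩ := List.length_eq_two.mp hv
      exact shuffleL_single_pair_apply a b c d p q r s
    | zero => simp [pairSum]
    | add g₁ g₂ _ _ h₁ h₂ => simp only [map_add, Finsupp.add_apply, h₁, h₂, pairSum]; ring
    | smul t g _ h => simp only [map_smul, Finsupp.smul_apply, h, smul_eq_mul, pairSum]; ring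
  | zero => simp [pairSum]
  | add f₁ f₂ _ _ h₁ h₂ =>
    simp only [map_add, LinearMap.add_apply, Finsupp.add_apply, h₁, h₂, pairSum]; ring
  | smul t f _ h =>
    simp only [map_smul, LinearMap.smul_apply, Finsupp.smul_apply, h, smul_eq_mul, pairSum]; ring

lemma sum_smul_shuffleL_apply {ι₁ ι₂ : Type*} [Fintype ι₁] [Fintype ι₂]
    {u : ι₁ → List ℕ →₀ ℚ} {v : ι₂ → List ℕ →₀ ℚ}
    (hu : ∀ i, u i ∈ Finsupp.supported ℚ ℚ {w | w.length = 2})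
    (hv : ∀ j, v j ∈ Finsupp.supported ℚ ℚ {w | w.length = 2}) (c : ι₁ × ι₂ → ℚ)
    (p q r s : ℕ) :
    (∑ t, c t • shuffleL (u t.1) (v t.2)) [p, q, r, s] =
      pairSum (fun a b c' d => ∑ t, c t * (u t.1 [a, b] * v t.2 [c', d])) p q r s := by
  simp only [Finsupp.coe_finsetSum, Finset.sum_apply, Finsupp.smul_apply, smul_eq_mul,
    shuffleL_apply_of_mem_supported (hu _) (hv _), pairSum, ← Finset.sum_add_distrib]
  exact Finset.sum_congr rfl fun t _ => by ring

end Shuffle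

section Weight

def depthTwoWords (N : ℕ) : Set (List ℕ) := {w | w.length = 2 ∧ w.sum = N}

lemma Fcomp_two_le_supported (N : ℕ) : Fcomp N 2 ≤ Finsupp.supported ℚ ℚ (depthTwoWords N) :=
  span_le.2 fun _ ⟨_, hf, hlen, hsum, _⟩ => hf ▸ Finsupp.single_mem_supported ℚ 1 ⟨hlen, hsum⟩

lemma supported_depthTwoWords_le {N : ℕ} :
    Finsupp.supported ℚ ℚ (depthTwoWords N) ≤ Finsupp.supported ℚ ℚ {w | w.length = 2} :=
  Finsupp.supported_mono fun _ hw => hw.1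

lemma depthTwoWords_finite (N : ℕ) : (depthTwoWords N).Finite := by
  refine (Set.finite_range fun t : Fin (N + 1) × Fin (N + 1) => [(t.1 : ℕ), t.2]).subset ?_
  rintro w ⟨hlen, hsum⟩
  obtain ⟨a, b, rfl⟩ := List.length_eq_two.mp hlen
  simp only [List.sum_cons, List.sum_nil, add_zero] at hsum
  exact ⟨(⟨a, by omega⟩, ⟨b, by omega⟩), rfl⟩

instance (N : ℕ) : FiniteDimensional ℚ (Finsupp.supported ℚ ℚ (depthTwoWords N)) :=
  have := (depthTwoWords_finite N).to_subtype
  Module.Finite.equiv (Finsupp.supportedEquivFinsupp (depthTwoWords N)).symm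

lemma linearIndependent_shuffleL {N₁ N₂ : ℕ} {B₁ B₂ : Submodule ℚ (List ℕ →₀ ℚ)}
    (hB₁ : B₁ ≤ Finsupp.supported ℚ ℚ (depthTwoWords N₁))
    (hB₂ : B₂ ≤ Finsupp.supported ℚ ℚ (depthTwoWords N₂)) (hdisj : B₁ ⊓ B₂ = ⊥)
    {ι₁ ι₂ : Type*} [Fintype ι₁] [Fintype ι₂] {u : ι₁ → List ℕ →₀ ℚ} {v : ι₂ → List ℕ →₀ ℚ}
    (hu : LinearIndependent ℚ u) (hv : LinearIndependent ℚ v) (huB : ∀ i, u i ∈ B₁)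
    (hvB : ∀ j, v j ∈ B₂) : LinearIndependent ℚ fun t : ι₁ × ι₂ => shuffleL (u t.1) (v t.2) := by
  rw [Fintype.linearIndependent_iff]
  intro c hc
  have hu₀ : ∀ i x, x ∉ depthTwoWords N₁ → u i x = 0 := fun i =>
    (Finsupp.mem_supported' ℚ _).mp (hB₁ (huB i))
  have hv₀ : ∀ j x, x ∉ depthTwoWords N₂ → v j x = 0 := fun j =>
    (Finsupp.mem_supported' ℚ _).mp (hB₂ (hvB j))
  set H : ℕ → ℕ → ℕ → ℕ → ℚ := fun a b c' d => ∑ t, c t * (u t.1 [a, b] * v t.2 [c', d])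
  have hsupp : ∀ a b c' d, ¬(a + b = N₁ ∧ c' + d = N₂) → H a b c' d = 0 := by
    intro a b c' d h
    refine Finset.sum_eq_zero fun t _ => ?_
    rcases not_and_or.mp h with h | h
    · rw [hu₀ t.1 [a, b] (by simp [depthTwoWords, h]), zero_mul, mul_zero]
    · rw [hv₀ t.2 [c', d] (by simp [depthTwoWords, h]), mul_zero, mul_zero]
  have hE : ∀ p q r s, pairSum H p q r s = 0 := fun p q r s => by
    rw [← sum_smul_shuffleL_apply (fun i => supported_depthTwoWords_le (hB₁ (huB i)))
      (fun j => supported_depthTwoWords_le (hB₂ (hvB j))), hc, Finsupp.coe_zero, Pi.zero_apply]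
  refine congrFun (eq_zero_of_sum_add_swap_eq_zero hdisj hu hv huB hvB fun x y => ?_)
  by_cases hxy : x.length = 2 ∧ y.length = 2
  · obtain ⟨a, b, rfl⟩ := List.length_eq_two.mp hxy.1
    obtain ⟨c', d, rfl⟩ := List.length_eq_two.mp hxy.2
    simpa only [H, mul_add, Finset.sum_add_distrib] using
      add_swap_eq_zero_of_pairSum_eq_zero hsupp hE a b c' d
  · refine Finset.sum_eq_zero fun t _ => ?_
    rcases not_and_or.mp hxy with h | h
    · rw [hu₀ t.1 x fun hx => h hx.1, hv₀ t.2 x fun hx => h hx.1]; ring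
    · rw [hu₀ t.1 y fun hy => h hy.1, hv₀ t.2 y fun hy => h hy.1]; ring

end Weight

/-- Lemma 4.3: if `B1 ⊆ F_{N1,2}` and `B2 ⊆ F_{N2,2}` are subspaces with `B1 ∩ B2 = {0}`, then
the span of the shuffle products `w1 ⧢ w2`, `w1 ∈ B1`, `w2 ∈ B2`, has dimension
`dim B1 · dim B2`. -/
theorem shuffle_product_dimension (N₁ N₂ : ℕ) (B₁ B₂ : Submodule ℚ (List ℕ →₀ ℚ))
    (hB₁ : B₁ ≤ Fcomp N₁ 2) (hB₂ : B₂ ≤ Fcomp N₂ 2) (hdisj : B₁ ⊓ B₂ = ⊥) :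
    Module.finrank ℚ
        (Submodule.span ℚ {f : List ℕ →₀ ℚ | ∃ w₁ ∈ B₁, ∃ w₂ ∈ B₂, f = shuffleF w₁ w₂}) =
      Module.finrank ℚ B₁ * Module.finrank ℚ B₂ := by
  have hB₁' := hB₁.trans (Fcomp_two_le_supported N₁)
  have hB₂' := hB₂.trans (Fcomp_two_le_supported N₂)
  have : FiniteDimensional ℚ B₁ := Submodule.finiteDimensional_of_le hB₁'
  have : FiniteDimensional ℚ B₂ := Submodule.finiteDimensional_of_le hB₂'
  let b₁ := Module.finBasis ℚ B₁
  let b₂ := Module.finBasis ℚ B₂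
  have hli := linearIndependent_shuffleL hB₁' hB₂' hdisj
    (b₁.linearIndependent.map' B₁.subtype B₁.ker_subtype)
    (b₂.linearIndependent.map' B₂.subtype B₂.ker_subtype) (fun i => (b₁ i).2) fun j => (b₂ j).2
  have hset : {f | ∃ w₁ ∈ B₁, ∃ w₂ ∈ B₂, f = shuffleF w₁ w₂} =
      {f | ∃ w₁ ∈ B₁, ∃ w₂ ∈ B₂, f = shuffleL w₁ w₂} := by
    simp only [shuffleF_eq_shuffleL]
  rw [hset]
  exact finrank_span_bilinear_eq_mul shuffleL b₁ b₂ hli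
end
end
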